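/- arXiv:1205.0128 — 11 statements merged into one kernel-verified Lean document; each statement's English description precedes it below -/
import Mathlib

section
/- Let n ≥ 5 be an integer and let t be an integer with 3 - ε(n) ≤ t ≤ n, where ε(n) = 1 if n is even and ε(n) = 0 if n is odd. Then the simple cycle C(n) admits NO cyclically interval t-coloring if and only if: (when n is odd) t is even and 4 ≤ t ≤ n-1; (when n is even) t is odd and n/2 + 2 + ε(n/2) ≤ t ≤ n-1. -/
/-- `ε(k) = 1` if `k` is even, `0` if `k` is odd. -/
def eps (k : ℕ) : ℕ := if Even k then 1 else 0

/-- A cyclically interval `t`-coloring of the simple cycle `C(n)`.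
The edges of `C(n)` are indexed by `ZMod n`; edges `i` and `i + 1` are the two
edges incident to a common vertex. The coloring uses colors `1, ..., t`, all
colors are used, adjacent edges get distinct colors, and at each vertex the two
incident edges receive either consecutive colors or the pair of colors `{1, t}`. -/
def IsCyclicIntervalColoring (n t : ℕ) (φ : ZMod n → ℕ) : Prop :=
  (∀ i, φ i ∈ Finset.Icc 1 t) ∧
  (∀ c ∈ Finset.Icc 1 t, ∃ i, φ i = c) ∧
  (∀ i, φ i ≠ φ (i + 1)) ∧
  (∀ i : ZMod n, φ (i + 1) = φ i + 1 ∨ φ i = φ (i + 1) + 1 ∨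
    (φ i = 1 ∧ φ (i + 1) = t) ∨ (φ i = t ∧ φ (i + 1) = 1))

def cstep (t a b : ℕ) : Prop :=
  b = a + 1 ∨ a = b + 1 ∨ (a = 1 ∧ b = t) ∨ (a = t ∧ b = 1)

lemma exists_of_seq (n t : ℕ) (hn : 2 ≤ n) (ht : 2 ≤ t) (g : ℕ → ℕ)
    (hg1 : ∀ k, k < n → 1 ≤ g k ∧ g k ≤ t)
    (hg2 : ∀ c, 1 ≤ c → c ≤ t → ∃ k, k < n ∧ g k = c)
    (hg3 : ∀ k, k + 1 < n → cstep t (g k) (g (k+1)))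
    (hg4 : cstep t (g (n-1)) (g 0)) :
    ∃ φ : ZMod n → ℕ, IsCyclicIntervalColoring n t φ := by
  haveI : NeZero n := ⟨by omega⟩
  refine ⟨fun i => g i.val, ?_, ?_, ?_, ?_⟩
  · intro i
    simp only [Finset.mem_Icc]
    exact hg1 i.val (ZMod.val_lt i)
  · intro c hc
    simp only [Finset.mem_Icc] at hc
    obtain ⟨k, hk, hgk⟩ := hg2 c hc.1 hc.2
    refine ⟨(k : ZMod n), ?_⟩
    show g ((k : ZMod n)).val = c
    rwa [ZMod.val_natCast_of_lt hk]
  · intro i hcontra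
    simp only at hcontra
    have hv : (i + 1).val = (i.val + 1) % n := by
      haveI : Fact (1 < n) := ⟨by omega⟩
      rw [ZMod.val_add, ZMod.val_one]
    have hstep : cstep t (g i.val) (g ((i + 1).val)) := by
      rcases Nat.lt_or_ge (i.val + 1) n with h | h
      · rw [hv, Nat.mod_eq_of_lt h]; exact hg3 i.val h
      · have : i.val = n - 1 := by have := ZMod.val_lt i; omega
        rw [hv, this]
        have : (n - 1 + 1) % n = 0 := by
          rw [Nat.sub_add_cancel (by omega), Nat.mod_self]
        rw [this]; exact hg4
    rcases hstep with h | h | ⟨h1, h2⟩ | ⟨h1, h2⟩ <;> omega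
  · intro i
    have hv : (i + 1).val = (i.val + 1) % n := by
      haveI : Fact (1 < n) := ⟨by omega⟩
      rw [ZMod.val_add, ZMod.val_one]
    have hstep : cstep t (g i.val) (g ((i + 1).val)) := by
      rcases Nat.lt_or_ge (i.val + 1) n with h | h
      · rw [hv, Nat.mod_eq_of_lt h]; exact hg3 i.val h
      · have : i.val = n - 1 := by have := ZMod.val_lt i; omega
        rw [hv, this]
        have : (n - 1 + 1) % n = 0 := by
          rw [Nat.sub_add_cancel (by omega), Nat.mod_self]
        rw [this]; exact hg4
    exact hstep

lemma exists1 (n t : ℕ) (hn : 2 ≤ n) (ht : 2 ≤ t) (htn : t ≤ n) (hp : n % 2 = t % 2) :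
    ∃ φ : ZMod n → ℕ, IsCyclicIntervalColoring n t φ := by
  apply exists_of_seq n t hn ht
    (fun k => if k < t then k + 1 else if (k - t) % 2 = 0 then 1 else 2)
  · intro k _
    split_ifs <;> omega
  · intro c hc1 hc2
    exact ⟨c - 1, by omega, by split_ifs <;> omega⟩
  · intro k hk; unfold cstep; split_ifs <;> omega
  · unfold cstep; split_ifs <;> omega

lemma exists2 (n t : ℕ) (hn : 2 ≤ n) (ht : 2 ≤ t) (htn : 2 * t ≤ n + 2) (hp : n % 2 = 0) :
    ∃ φ : ZMod n → ℕ, IsCyclicIntervalColoring n t φ := by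
  apply exists_of_seq n t hn ht
    (fun k => if k < t then k + 1 else if k < 2 * t - 2 then 2 * t - 1 - k
      else if (k - (2 * t - 2)) % 2 = 0 then 1 else 2)
  · intro k _
    split_ifs <;> omega
  · intro c hc1 hc2
    exact ⟨c - 1, by omega, by split_ifs <;> omega⟩
  · intro k hk; unfold cstep; split_ifs <;> omega
  · unfold cstep; split_ifs <;> omega

lemma nonexistA (n t : ℕ) (hn : 2 ≤ n) (hno : n % 2 = 1) (hte : t % 2 = 0) :
    ¬ ∃ φ : ZMod n → ℕ, IsCyclicIntervalColoring n t φ := by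
  rintro ⟨φ, h1, h2, h3, h4⟩
  haveI : NeZero n := ⟨by omega⟩
  have key : ∀ i : ZMod n, (φ i + φ (i + 1)) % 2 = 1 := by
    intro i
    have hb1 := h1 i
    have hb2 := h1 (i + 1)
    simp only [Finset.mem_Icc] at hb1 hb2
    rcases h4 i with h | h | ⟨ha, hb⟩ | ⟨ha, hb⟩ <;> omega
  have aux : ∀ k : ℕ, (φ ((k : ℕ) : ZMod n) + k + φ 0) % 2 = 0 := by
    intro k
    induction k with
    | zero => simp only [Nat.cast_zero, Nat.add_zero]; omega
    | succ m ih =>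
      have hc : (((m + 1 : ℕ)) : ZMod n) = ((m : ℕ) : ZMod n) + 1 := by push_cast; ring
      rw [hc]
      have := key ((m : ℕ) : ZMod n)
      omega
  have := aux n
  rw [ZMod.natCast_self] at this
  omega

lemma walk_abs (d : ℕ → ℤ) (hd : ∀ j, d j = 1 ∨ d j = -1) (a b : ℕ) (h : a ≤ b) :
    |∑ j ∈ Finset.Ico a b, d j| ≤ (b : ℤ) - a := by
  calc |∑ j ∈ Finset.Ico a b, d j| ≤ ∑ j ∈ Finset.Ico a b, |d j| :=
        Finset.abs_sum_le_sum_abs _ _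
    _ = ∑ _j ∈ Finset.Ico a b, (1 : ℤ) := by
        apply Finset.sum_congr rfl
        intro j _
        rcases hd j with h' | h' <;> simp [h']
    _ = ((b - a : ℕ) : ℤ) := by simp [Nat.card_Ico]
    _ ≤ (b : ℤ) - a := by omega

lemma walk_parity (d : ℕ → ℤ) (hd : ∀ j, d j = 1 ∨ d j = -1) (a b : ℕ) :
    (∑ j ∈ Finset.Ico a b, d j) % 2 = ((b - a : ℕ) : ℤ) % 2 := by
  rw [Finset.sum_int_mod]
  have : ∀ j ∈ Finset.Ico a b, d j % 2 = 1 := by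
    intro j _; rcases hd j with h' | h' <;> simp [h']
  rw [Finset.sum_congr rfl this]
  simp [Nat.card_Ico]

lemma nonexistB (n t : ℕ) (hn : 5 ≤ n) (hne : n % 2 = 0) (hto : t % 2 = 1)
    (hge : n / 2 + 2 ≤ t) (htn : t ≤ n) :
    ¬ ∃ φ : ZMod n → ℕ, IsCyclicIntervalColoring n t φ := by
  rintro ⟨φ, h1, h2, h3, h4⟩
  haveI : NeZero n := ⟨by omega⟩
  haveI : NeZero t := ⟨by omega⟩
  simp only [Finset.mem_Icc] at h1 h2
  set D : ℕ → ℤ := fun k =>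
    if φ ((k : ZMod n) + 1) = φ ((k : ZMod n)) + 1 ∨
        (φ ((k : ZMod n)) = t ∧ φ ((k : ZMod n) + 1) = 1)
    then 1 else -1 with hD
  have hd : ∀ j, D j = 1 ∨ D j = -1 := by
    intro j; rw [hD]; dsimp only; split_ifs <;> simp
  set F : ℕ → ℤ := fun k => (φ 0 : ℤ) + ∑ j ∈ Finset.range k, D j with hF
  have L1 : ∀ k : ℕ, ((F k : ℤ) : ZMod t) = ((φ ((k : ℕ) : ZMod n) : ℕ) : ZMod t) := by
    intro k
    induction k with
    | zero => simp [hF]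
    | succ m ih =>
      have hFm : F (m + 1) = F m + D m := by
        rw [hF]; dsimp only; rw [Finset.sum_range_succ]; ring
      have hc : (((m + 1 : ℕ)) : ZMod n) = ((m : ℕ) : ZMod n) + 1 := by push_cast; ring
      rw [hFm, hc]
      by_cases hcond : φ ((m : ZMod n) + 1) = φ ((m : ZMod n)) + 1 ∨
          (φ ((m : ZMod n)) = t ∧ φ ((m : ZMod n) + 1) = 1)
      · have hDm : D m = 1 := by rw [hD]; dsimp only; rw [if_pos hcond]
        rw [hDm]
        rcases hcond with h | ⟨ha, hb⟩
        · rw [h]; push_cast; rw [ih]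
        · push_cast
          rw [ih, ha, hb]
          push_cast
          simp [ZMod.natCast_self]
      · have hDm : D m = -1 := by rw [hD]; dsimp only; rw [if_neg hcond]
        rw [hDm]
        rcases h4 ((m : ℕ) : ZMod n) with h | h | ⟨ha, hb⟩ | h
        · exact absurd (Or.inl h) hcond
        · push_cast
          rw [ih, h]
          push_cast
          ring
        · push_cast
          rw [ih, ha, hb]
          push_cast
          simp [ZMod.natCast_self]
        · exact absurd (Or.inr h) hcond
  have hzero : ∑ j ∈ Finset.range n, D j = 0 := by
    have e1 : ((F n : ℤ) : ZMod t) = ((F 0 : ℤ) : ZMod t) := by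
      rw [L1 n, L1 0]
      norm_num [ZMod.natCast_self]
    have e2 : (t : ℤ) ∣ (F n - F 0) :=
      Int.ModEq.dvd ((ZMod.intCast_eq_intCast_iff _ _ _).mp e1.symm)
    have hs : F n - F 0 = ∑ j ∈ Finset.range n, D j := by rw [hF]; dsimp only; simp
    have hpar : (∑ j ∈ Finset.range n, D j) % 2 = 0 := by
      have := walk_parity D hd 0 n
      rw [Finset.range_eq_Ico]
      omega
    have habs : |∑ j ∈ Finset.range n, D j| ≤ (n : ℤ) := by
      have := walk_abs D hd 0 n (by omega)
      rw [Finset.range_eq_Ico]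
      simpa using this
    rw [hs] at e2
    obtain ⟨q, hq⟩ := e2
    have hqeven : Even q := by
      rcases Int.even_or_odd q with h | h
      · exact h
      · exfalso
        have ht' : Odd (t : ℤ) := by rw [Int.odd_iff]; omega
        have : Odd ((t : ℤ) * q) := ht'.mul h
        rw [← hq, Int.odd_iff] at this
        omega
    obtain ⟨r, hr⟩ := hqeven
    by_contra hne0
    have hr0 : r ≠ 0 := by
      rintro rfl
      simp at hr
      rw [hr, mul_zero] at hq
      exact hne0 hq
    have h1r : 1 ≤ |r| := Int.one_le_abs (by omega)
    have habs2 : |∑ j ∈ Finset.range n, D j| = 2 * ((t : ℤ) * |r|) := by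
      rw [hq, hr]
      rw [show (t : ℤ) * (r + r) = (t : ℤ) * 2 * r by ring, abs_mul]
      rw [abs_of_nonneg (by positivity : (0 : ℤ) ≤ (t : ℤ) * 2)]
      ring
    have : (t : ℤ) * 1 ≤ (t : ℤ) * |r| :=
      mul_le_mul_of_nonneg_left h1r (by positivity)
    have h2t : (n : ℤ) + 4 ≤ 2 * t := by push_cast; omega
    rw [habs2] at habs
    linarith
  have hbound : ∀ a b : ℕ, a ≤ b → b ≤ n → 2 * |F b - F a| ≤ (n : ℤ) := by
    intro a b hab hbn
    have hs : F b - F a = ∑ j ∈ Finset.Ico a b, D j := by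
      rw [hF]; dsimp only
      rw [Finset.sum_Ico_eq_sub _ hab]
      ring
    have hsplit : (0 : ℤ) = (∑ j ∈ Finset.Ico 0 a, D j) + (∑ j ∈ Finset.Ico a b, D j)
        + (∑ j ∈ Finset.Ico b n, D j) := by
      rw [← hzero, Finset.range_eq_Ico,
        ← Finset.sum_Ico_consecutive D (Nat.zero_le a) (le_trans hab hbn),
        ← Finset.sum_Ico_consecutive D hab hbn]
      ring
    have b1 := abs_le.mp (walk_abs D hd 0 a (Nat.zero_le a))
    have b2 := abs_le.mp (walk_abs D hd a b hab)
    have b3 := abs_le.mp (walk_abs D hd b n hbn)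
    rw [hs]
    rcases abs_cases (∑ j ∈ Finset.Ico a b, D j) with ⟨he, _⟩ | ⟨he, _⟩ <;> rw [he] <;>
      push_cast at b1 b2 b3 ⊢ <;> linarith
  obtain ⟨k0, hk0mem, hk0min⟩ :=
    Finset.exists_min_image (Finset.range n) F ⟨0, Finset.mem_range.mpr (by omega)⟩
  have hk0n : k0 < n := Finset.mem_range.mp hk0mem
  have hwin : ∀ k, k < n → F k ∈ Finset.Icc (F k0) (F k0 + ((n / 2 : ℕ) : ℤ)) := by
    intro k hk
    have hmin := hk0min k (Finset.mem_range.mpr hk)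
    have hb : 2 * |F k - F k0| ≤ (n : ℤ) := by
      rcases le_total k k0 with h | h
      · rw [abs_sub_comm]; exact hbound k k0 h (le_of_lt hk0n)
      · exact hbound k0 k h (le_of_lt hk)
    rw [abs_of_nonneg (by linarith)] at hb
    simp only [Finset.mem_Icc]
    constructor
    · exact hmin
    · have : ((n / 2 : ℕ) : ℤ) * 2 = (n : ℤ) := by push_cast; omega
      linarith
  have hsur : ∀ z : ZMod t, ∃ s ∈ (Finset.range n).image F, ((s : ℤ) : ZMod t) = z := by
    intro z
    set c : ℕ := if z = 0 then t else z.val with hc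
    have hc1 : 1 ≤ c ∧ c ≤ t := by
      rw [hc]; split_ifs with h
      · omega
      · have h1' := ZMod.val_lt z
        have h2' := ZMod.val_pos.mpr h
        omega
    have hcz : ((c : ℕ) : ZMod t) = z := by
      rw [hc]; split_ifs with h
      · rw [ZMod.natCast_self]; exact h.symm
      · exact ZMod.natCast_rightInverse z
    obtain ⟨i, hi⟩ := h2 c hc1
    refine ⟨F i.val, Finset.mem_image_of_mem F (Finset.mem_range.mpr (ZMod.val_lt i)), ?_⟩
    rw [L1 i.val, ZMod.natCast_rightInverse i, hi, hcz]
  have hcard1 : ((Finset.range n).image F).card ≤ n / 2 + 1 := by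
    have hsub : (Finset.range n).image F ⊆ Finset.Icc (F k0) (F k0 + ((n / 2 : ℕ) : ℤ)) := by
      intro s hs
      obtain ⟨k, hk, rfl⟩ := Finset.mem_image.mp hs
      exact hwin k (Finset.mem_range.mp hk)
    calc ((Finset.range n).image F).card
        ≤ (Finset.Icc (F k0) (F k0 + ((n / 2 : ℕ) : ℤ))).card := Finset.card_le_card hsub
      _ = n / 2 + 1 := by rw [Int.card_Icc]; omega
  have hcard2 : t ≤ ((Finset.range n).image F).card := by
    have hsurj : Set.SurjOn (fun s : ℤ => ((s : ZMod t)))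
        ((Finset.range n).image F) (Finset.univ : Finset (ZMod t)) := by
      intro z _
      obtain ⟨s, hs, hsz⟩ := hsur z
      exact ⟨s, hs, hsz⟩
    have := Finset.card_le_card_of_surjOn _ hsurj
    simpa [ZMod.card] using this
  omega

/-- For integers `n ≥ 5` and `3 - ε(n) ≤ t ≤ n`, the cycle `C(n)` admits no
cyclically interval `t`-coloring iff (`n` odd) `t` is even with `4 ≤ t ≤ n-1`,
or (`n` even) `t` is odd with `n/2 + 2 + ε(n/2) ≤ t ≤ n-1`. -/
theorem statement0 (n t : ℕ) (hn : 5 ≤ n) (ht1 : 3 - eps n ≤ t) (ht2 : t ≤ n) :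
    (¬ ∃ φ : ZMod n → ℕ, IsCyclicIntervalColoring n t φ) ↔
      ((Odd n ∧ Even t ∧ 4 ≤ t ∧ t ≤ n - 1) ∨
       (Even n ∧ Odd t ∧ n / 2 + 2 + eps (n / 2) ≤ t ∧ t ≤ n - 1)) := by
  constructor
  · intro h
    rcases Nat.even_or_odd n with hev | hod
    · right
      have hn2 : n % 2 = 0 := Nat.even_iff.mp hev
      have he1 : eps n = 1 := by simp [eps, hev]
      have ht2' : 2 ≤ t := by omega
      have hodd : t % 2 = 1 := by
        by_contra hcon
        exact h (exists1 n t (by omega) ht2' ht2 (by omega))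
      have hget : n / 2 + 2 ≤ t := by
        by_contra hcon
        exact h (exists2 n t (by omega) ht2' (by omega) hn2)
      refine ⟨hev, Nat.odd_iff.mpr hodd, ?_, by omega⟩
      rcases Nat.even_or_odd (n / 2) with he2 | ho2
      · have hx : eps (n / 2) = 1 := by simp [eps, he2]
        have hne2 : n / 2 % 2 = 0 := Nat.even_iff.mp he2
        omega
      · have hx : eps (n / 2) = 0 := by simp [eps, Nat.not_even_iff_odd.mpr ho2]
        omega
    · left
      have hn2 : n % 2 = 1 := Nat.odd_iff.mp hod
      have he0 : eps n = 0 := by simp [eps, Nat.not_even_iff_odd.mpr hod]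
      have ht3 : 3 ≤ t := by omega
      have hte : t % 2 = 0 := by
        by_contra hcon
        exact h (exists1 n t (by omega) (by omega) ht2 (by omega))
      exact ⟨hod, Nat.even_iff.mpr hte, by omega, by omega⟩
  · rintro (⟨hod, hev, h4t, hn1⟩ | ⟨hev, hod, hget, hn1⟩)
    · exact nonexistA n t (by omega) (Nat.odd_iff.mp hod) (Nat.even_iff.mp hev)
    · exact nonexistB n t hn (Nat.even_iff.mp hev) (Nat.odd_iff.mp hod) (by omega) ht2
end

section
/- Let n ≥ 5 be an odd integer and let t be an even integer with 4 ≤ t ≤ n-1. Then the simple cycle C(n) admits no cyclically interval t-coloring. -/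
/-- For odd `n ≥ 5` and even `t` with `4 ≤ t ≤ n - 1`, the cycle `C(n)` admits
no cyclically interval `t`-coloring. -/
theorem statement1 (n t : ℕ) (hn : 5 ≤ n) (hodd : Odd n) (hev : Even t)
    (h4 : 4 ≤ t) (ht : t ≤ n - 1) :
    ¬ ∃ φ : ZMod n → ℕ, IsCyclicIntervalColoring n t φ := by
  rintro ⟨φ, -, -, -, hstep⟩
  haveI : NeZero n := ⟨by omega⟩
  haveI : NeZero t := ⟨by omega⟩
  set ψ : ZMod n → ZMod t := fun i => (φ i : ZMod t) with hψ
  -- each step is ±1 mod t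
  have hd : ∀ i : ZMod n, ψ (i + 1) - ψ i = 1 ∨ ψ (i + 1) - ψ i = -1 := by
    intro i
    rcases hstep i with h | h | ⟨h1, h2⟩ | ⟨h1, h2⟩
    · left
      simp only [hψ, h]
      push_cast
      ring
    · right
      simp only [hψ, h]
      push_cast
      ring
    · right
      simp only [hψ, h1, h2, ZMod.natCast_self]
      push_cast
      ring
    · left
      simp only [hψ, h1, h2, ZMod.natCast_self]
      push_cast
      ring
  obtain ⟨m, hm⟩ := hev
  have hdvd : 2 ∣ t := ⟨m, by omega⟩
  let f : ZMod t →+* ZMod 2 := ZMod.castHom hdvd (ZMod 2)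
  have key : ∀ i : ZMod n, f (ψ (i + 1) - ψ i) = 1 := by
    intro i
    rcases hd i with h | h <;> rw [h] <;> simp <;> decide
  have hsum : ∑ i : ZMod n, (ψ (i + 1) - ψ i) = 0 := by
    rw [Finset.sum_sub_distrib]
    have := Fintype.sum_equiv (Equiv.addRight (1 : ZMod n))
      (fun i => ψ (i + 1)) ψ (fun i => rfl)
    rw [this, sub_self]
  have h0 : (0 : ZMod 2) = ∑ i : ZMod n, (1 : ZMod 2) := by
    calc (0 : ZMod 2) = f 0 := by simp
    _ = f (∑ i : ZMod n, (ψ (i + 1) - ψ i)) := by rw [hsum]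
    _ = ∑ i : ZMod n, f (ψ (i + 1) - ψ i) := map_sum f _ _
    _ = ∑ i : ZMod n, (1 : ZMod 2) := by
        exact Finset.sum_congr rfl fun i _ => key i
  rw [Finset.sum_const, Finset.card_univ, ZMod.card n, nsmul_eq_mul, mul_one] at h0
  have hn2 : (n : ZMod 2) = 1 := by
    obtain ⟨k, hk⟩ := hodd
    rw [hk]
    push_cast
    rw [show (2 : ZMod 2) = 0 from rfl]
    ring
  rw [hn2] at h0
  exact zero_ne_one h0
end

section
/- Let n ≥ 6 be an even integer and let t be an odd integer with n/2 + 2 + ε(n/2) ≤ t ≤ n-1, where ε(k) = 1 if k is even and ε(k) = 0 if k is odd. Then the simple cycle C(n) admits no cyclically interval t-coloring. -/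
/-- For even `n ≥ 6` and odd `t` with `n/2 + 2 + ε(n/2) ≤ t ≤ n - 1`, the cycle
`C(n)` admits no cyclically interval `t`-coloring. -/
theorem statement2 (n t : ℕ) (hn : 6 ≤ n) (hev : Even n) (hodd : Odd t)
    (h1 : n / 2 + 2 + eps (n / 2) ≤ t) (h2 : t ≤ n - 1) :
    ¬ ∃ φ : ZMod n → ℕ, IsCyclicIntervalColoring n t φ := by
  classical
  rintro ⟨φ, hrange, hsurj, hne, hstep⟩
  set h := n / 2 with hh
  have hn2 : 2 * h = n := by
    obtain ⟨m, hm⟩ := hev; omega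
  have ht : h + 2 ≤ t := le_trans (Nat.le_add_right _ _) h1
  haveI : NeZero n := ⟨by omega⟩
  haveI : NeZero t := ⟨by omega⟩
  -- the step sequence
  set s : ℕ → ℤ := fun j =>
    if φ ((j : ZMod n) + 1) = φ (j : ZMod n) + 1 ∨
       (φ (j : ZMod n) = t ∧ φ ((j : ZMod n) + 1) = 1) then 1 else -1 with hs
  set g : ℕ → ℤ := fun j => ∑ i ∈ Finset.range j, s i with hg
  have habs : ∀ j, s j = 1 ∨ s j = -1 := by
    intro j; rw [hs]; dsimp only; split <;> simp
  -- the walk tracks the coloring mod t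
  have hA : ∀ j : ℕ, ((φ (j : ZMod n) : ZMod t))
      = ((φ 0 : ZMod t)) + (g j : ZMod t) := by
    intro j
    induction j with
    | zero => simp [hg]
    | succ j ih =>
      have hc := hstep (j : ZMod n)
      have hgs : g (j + 1) = g j + s j := Finset.sum_range_succ _ _
      have hcast : ((j + 1 : ℕ) : ZMod n) = (j : ZMod n) + 1 := by push_cast; ring
      have htz : ((t : ℕ) : ZMod t) = 0 := ZMod.natCast_self t
      rw [hcast, hgs]
      by_cases hif : φ ((j : ZMod n) + 1) = φ (j : ZMod n) + 1 ∨
          (φ (j : ZMod n) = t ∧ φ ((j : ZMod n) + 1) = 1)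
      · have hs1 : s j = 1 := by rw [hs]; dsimp only; rw [if_pos hif]
        rw [hs1]
        rcases hif with h' | ⟨ha, hb⟩
        · rw [h']; push_cast; linear_combination ih
        · rw [hb]
          rw [ha] at ih
          push_cast
          linear_combination ih - htz
      · have hs1 : s j = -1 := by rw [hs]; dsimp only; rw [if_neg hif]
        rw [hs1]
        have h' : φ (j : ZMod n) = φ ((j : ZMod n) + 1) + 1 ∨
            (φ (j : ZMod n) = 1 ∧ φ ((j : ZMod n) + 1) = t) := by tauto
        rcases h' with h' | ⟨ha, hb⟩
        · have h'' : ((φ (j : ZMod n) : ZMod t))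
              = (φ ((j : ZMod n) + 1) : ZMod t) + 1 := by rw [h']; push_cast; ring
          push_cast
          linear_combination ih - h''
        · rw [hb]
          rw [ha] at ih
          push_cast at ih ⊢
          linear_combination ih + htz
  -- increments of the walk are bounded by the number of steps
  have hB : ∀ i j : ℕ, i ≤ j → |g j - g i| ≤ (j : ℤ) - i := by
    intro i j hij
    have hgd : g j - g i = ∑ k ∈ Finset.Ico i j, s k := by
      rw [hg]; dsimp only
      rw [Finset.sum_Ico_eq_sub _ hij]
    rw [hgd]
    calc |∑ k ∈ Finset.Ico i j, s k| ≤ ∑ k ∈ Finset.Ico i j, |s k| :=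
          Finset.abs_sum_le_sum_abs _ _
      _ = ∑ _k ∈ Finset.Ico i j, (1 : ℤ) := by
          apply Finset.sum_congr rfl
          intro k _
          rcases habs k with h' | h' <;> rw [h'] <;> simp
      _ = ((j - i : ℕ) : ℤ) := by simp
      _ ≤ (j : ℤ) - i := by
          have : (i : ℤ) ≤ j := by exact_mod_cast hij
          omega
  -- the walk has the parity of the number of steps
  have hpar : ∀ j : ℕ, g j % 2 = (j : ℤ) % 2 := by
    intro j
    induction j with
    | zero => simp [hg]
    | succ j ih =>
      have hgs : g (j + 1) = g j + s j := Finset.sum_range_succ _ _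
      rcases habs j with h' | h' <;> rw [hgs, h'] <;> push_cast <;> omega
  -- the walk is closed
  have hCdvd : (t : ℤ) ∣ g n := by
    have hn0 : ((n : ℕ) : ZMod n) = 0 := ZMod.natCast_self n
    have hAn := hA n
    rw [hn0] at hAn
    have hz : (g n : ZMod t) = 0 := by linear_combination -hAn
    exact_mod_cast (ZMod.intCast_zmod_eq_zero_iff_dvd _ _).mp hz
  have hC : g n = 0 := by
    by_contra hne0
    obtain ⟨k, hk⟩ := hCdvd
    have hk0 : k ≠ 0 := by rintro rfl; simp at hk; exact hne0 hk
    have hgn_bound : |g n| ≤ (n : ℤ) := by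
      have := hB 0 n (Nat.zero_le n)
      simpa [hg] using this
    have hgn_even : g n % 2 = 0 := by
      have := hpar n
      omega
    -- k must be even since t is odd
    have hkeven : k % 2 = 0 := by
      have hev' : Even (g n) := Int.even_iff.mpr hgn_even
      rw [hk] at hev'
      rcases Int.even_mul.mp hev' with h' | h'
      · exact absurd (by exact_mod_cast h' : Even t) (Nat.not_even_iff_odd.mpr hodd)
      · exact Int.even_iff.mp h'
    have hk2 : 2 ≤ |k| := by
      rcases abs_cases k with ⟨h', _⟩ | ⟨h', _⟩ <;> omega
    have habs2 : (2 * t : ℤ) ≤ |g n| := by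
      rw [hk, abs_mul]
      have habst : |(t : ℤ)| = t := abs_of_nonneg (by positivity)
      rw [habst]
      nlinarith [hk2, (show (0:ℤ) < t by exact_mod_cast (by omega : 0 < t))]
    have h2t : (2 * t : ℤ) ≤ n := le_trans habs2 hgn_bound
    have hnZ : (n : ℤ) = 2 * h := by exact_mod_cast hn2.symm
    have htZ : (h : ℤ) + 2 ≤ t := by exact_mod_cast ht
    omega
  -- wrap-around bound on increments
  have hD : ∀ i j : ℕ, i ≤ j → j ≤ n → |g j - g i| ≤ ((n : ℤ) - j) + i := by
    intro i j hij hjn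
    have h1' := hB j n hjn
    have h2' := hB 0 i (Nat.zero_le i)
    rw [hC] at h1'
    have hg0 : g 0 = 0 := by simp [hg]
    rw [hg0] at h2'
    have e1 := abs_le.mp h1'
    have e2 := abs_le.mp h2'
    rw [abs_le]
    push_cast at e1 e2 ⊢
    omega
  -- diameter of the walk over one period is at most n/2
  obtain ⟨j₁, hj₁mem, hj₁min⟩ :=
    Finset.exists_min_image (Finset.range n) g ⟨0, Finset.mem_range.mpr (by omega)⟩
  have hj₁n : j₁ < n := Finset.mem_range.mp hj₁mem
  have hdiam : ∀ j < n, g j₁ ≤ g j ∧ g j ≤ g j₁ + h := by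
    intro j hjn
    have hmin : g j₁ ≤ g j := hj₁min j (Finset.mem_range.mpr hjn)
    refine ⟨hmin, ?_⟩
    have hnZ : (n : ℤ) = 2 * h := by exact_mod_cast hn2.symm
    rcases le_or_gt j₁ j with hle | hlt
    · have e1 := abs_le.mp (hB j₁ j hle)
      have e2 := abs_le.mp (hD j₁ j hle (by omega))
      push_cast at e1 e2
      omega
    · have e1 := abs_le.mp (hB j j₁ (le_of_lt hlt))
      have e2 := abs_le.mp (hD j j₁ (le_of_lt hlt) (by omega))
      push_cast at e1 e2
      omega
  -- all residues mod t are hit by the walk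
  have hT : ∀ z : ZMod t, ∃ j < n, (g j : ZMod t) = z - ((φ 0 : ZMod t)) := by
    intro z
    set c : ℕ := if z.val = 0 then t else z.val with hcdef
    have hcmem : c ∈ Finset.Icc 1 t := by
      rw [Finset.mem_Icc, hcdef]
      have hvt : z.val < t := ZMod.val_lt z
      split <;> omega
    have hcw : ((c : ℕ) : ZMod t) = z := by
      have hv : ((z.val : ℕ) : ZMod t) = z := ZMod.natCast_rightInverse z
      rw [hcdef]
      split
      · rename_i h0
        rw [ZMod.natCast_self, ← hv, h0]
        simp
      · exact hv
    obtain ⟨i, hi⟩ := hsurj c hcmem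
    refine ⟨i.val, ZMod.val_lt i, ?_⟩
    have hAi := hA i.val
    rw [show ((i.val : ℕ) : ZMod n) = i from ZMod.natCast_rightInverse i, hi] at hAi
    linear_combination hcw - hAi
  -- counting: t distinct residues inside an interval of length n/2 + 1
  set F : Finset ℤ := Finset.image g (Finset.range n) with hF
  have hFsub : F ⊆ Finset.Icc (g j₁) (g j₁ + h) := by
    intro x hx
    rw [hF] at hx
    obtain ⟨j, hj, rfl⟩ := Finset.mem_image.mp hx
    have := hdiam j (Finset.mem_range.mp hj)
    rw [Finset.mem_Icc]
    exact this
  have hFcard : F.card ≤ h + 1 := by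
    calc F.card ≤ (Finset.Icc (g j₁) (g j₁ + h)).card := Finset.card_le_card hFsub
      _ = h + 1 := by
          rw [Int.card_Icc]
          omega
  have huniv : (Finset.univ : Finset (ZMod t)) ⊆
      Finset.image (fun x : ℤ => (x : ZMod t) + ((φ 0 : ZMod t))) F := by
    intro z _
    obtain ⟨j, hj, hjz⟩ := hT z
    refine Finset.mem_image.mpr ⟨g j, ?_, ?_⟩
    · exact Finset.mem_image.mpr ⟨j, Finset.mem_range.mpr hj, rfl⟩
    · linear_combination hjz
  have hcard : t ≤ F.card := by
    calc t = Fintype.card (ZMod t) := (ZMod.card t).symm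
      _ = (Finset.univ : Finset (ZMod t)).card := rfl
      _ ≤ (Finset.image (fun x : ℤ => (x : ZMod t) + ((φ 0 : ZMod t))) F).card :=
          Finset.card_le_card huniv
      _ ≤ F.card := Finset.card_image_le
  omega
end

section
/- For every integer n ≥ 5, the set Θ(C(n)) of integers t for which the simple cycle C(n) admits a cyclically interval t-coloring equals: the set of odd integers t with 3 ≤ t ≤ n, if n is odd; and the union of the interval [2, n/2 + 1] with the set of even integers t satisfying n/2 + 3 - ε(n/2) ≤ t ≤ n, if n is even (where ε(k) = 1 if k is even, ε(k) = 0 if k is odd). -/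
open Finset

def CyclicallyAdjacent (t a b : ℕ) : Prop :=
  b = a + 1 ∨ a = b + 1 ∨ (a = 1 ∧ b = t) ∨ (a = t ∧ b = 1)

lemma CyclicallyAdjacent.exists_natCast_eq {t a b : ℕ} (h : CyclicallyAdjacent t a b) :
    ∃ s : ℤ, |s| = 1 ∧ (b : ZMod t) = a + s := by
  rcases h with rfl | rfl | ⟨rfl, rfl⟩ | ⟨rfl, rfl⟩
  · exact ⟨1, abs_one, by push_cast; ring⟩
  · exact ⟨-1, by simp, by push_cast; ring⟩
  · exact ⟨-1, by simp, by simp⟩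
  · exact ⟨1, abs_one, by simp⟩

lemma exists_lift_of_cyclicallyAdjacent {t : ℕ} (f : ℕ → ℕ)
    (hf : ∀ j, CyclicallyAdjacent t (f j) (f (j + 1))) :
    ∃ L : ℕ → ℤ, L 0 = 0 ∧ (∀ j, |L (j + 1) - L j| = 1) ∧ ∀ j, (L j : ZMod t) = f j - f 0 := by
  choose s hs_abs hs using fun j => (hf j).exists_natCast_eq
  refine ⟨fun j => ∑ k ∈ range j, s k, by simp, fun j => by simp [sum_range_succ, hs_abs], ?_⟩
  intro j
  induction j with
  | zero => simp
  | succ j ih => push_cast [sum_range_succ, ih, hs j]; ring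

lemma abs_sub_le_of_unit_steps {L : ℕ → ℤ} (hL : ∀ j, |L (j + 1) - L j| = 1) {a b : ℕ}
    (hab : a ≤ b) : |L b - L a| ≤ (b : ℤ) - a := by
  induction b, hab using Nat.le_induction with
  | base => simp
  | succ b _ ih =>
    have := abs_sub_le (L (b + 1)) (L b) (L a)
    push_cast
    linarith [hL b]

lemma two_dvd_sub_of_unit_steps {L : ℕ → ℤ} (hL : ∀ j, |L (j + 1) - L j| = 1) (j : ℕ) :
    2 ∣ L j - L 0 - j := by
  induction j with
  | zero => simp
  | succ j ih =>
    rcases (abs_eq zero_le_one).mp (hL j) with h | h <;> push_cast <;> omega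

lemma two_mul_abs_sub_le_of_unit_steps {L : ℕ → ℤ} (hL : ∀ j, |L (j + 1) - L j| = 1) {n a b : ℕ}
    (hclosed : L n = L 0) (ha : a ≤ n) (hb : b ≤ n) :
    2 * |L b - L a| ≤ n := by
  wlog hab : a ≤ b generalizing a b
  · rw [abs_sub_comm]; exact this hb ha (by omega)
  have h₁ := abs_sub_le_of_unit_steps hL hab
  have h₂ := abs_sub_le_of_unit_steps hL hb
  have h₃ := abs_sub_le_of_unit_steps hL (Nat.zero_le a)
  have h₄ := abs_sub_le (L b) (L 0) (L a)
  rw [abs_sub_comm (L b) (L 0), abs_sub_comm (L 0) (L a)] at h₄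
  rw [hclosed] at h₂
  push_cast at h₁ h₂ h₃
  linarith

lemma Int.card_le_of_forall_sub_le {S : Finset ℤ} {d : ℕ} (h : ∀ x ∈ S, ∀ y ∈ S, x - y ≤ d) :
    #S ≤ d + 1 := by
  rcases S.eq_empty_or_nonempty with rfl | hS
  · simp
  have hsub : S ⊆ Icc (S.min' hS) (S.min' hS + d) := fun x hx =>
    mem_Icc.mpr ⟨S.min'_le x hx, by linarith [h x hx _ (S.min'_mem hS)]⟩
  have := card_le_card hsub
  rw [Int.card_Icc] at this
  omega

lemma ZMod.exists_mem_Icc_natCast_eq {t : ℕ} [NeZero t] (r : ZMod t) :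
    ∃ c ∈ Icc 1 t, (c : ZMod t) = r := by
  by_cases hr : r = 0
  · exact ⟨t, by simp [Nat.one_le_iff_ne_zero, NeZero.ne t], by simp [hr]⟩
  · have : r.val ≠ 0 := (ZMod.val_ne_zero r).mpr hr
    exact ⟨r.val, by simp [mem_Icc, (ZMod.val_lt r).le]; omega, ZMod.natCast_zmod_val r⟩

lemma le_of_closed_unit_steps {L : ℕ → ℤ} (hL : ∀ j, |L (j + 1) - L j| = 1) {n t : ℕ}
    [NeZero t] (hclosed : L n = L 0) (hsurj : ∀ r : ZMod t, ∃ k < n, (L k : ZMod t) = r) :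
    t ≤ n / 2 + 1 := by
  calc t = #(univ : Finset (ZMod t)) := by simp
    _ ≤ #(((range n).image L).image ((↑) : ℤ → ZMod t)) := card_le_card fun r _ => by
      obtain ⟨k, hk, rfl⟩ := hsurj r
      simpa using ⟨k, hk, rfl⟩
    _ ≤ #((range n).image L) := card_image_le
    _ ≤ n / 2 + 1 := Int.card_le_of_forall_sub_le fun x hx y hy => by
      obtain ⟨a, ha, rfl⟩ := mem_image.mp hx
      obtain ⟨b, hb, rfl⟩ := mem_image.mp hy
      have := two_mul_abs_sub_le_of_unit_steps hL hclosed (mem_range.mp hb).le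
        (mem_range.mp ha).le
      have := le_abs_self (L a - L b)
      omega

lemma mod_two_eq_or_two_mul_le_of_dvd {t m n : ℕ} (hm : 0 < m) (hdvd : t ∣ m) (hmn : m ≤ n)
    (hpar : m % 2 = n % 2) : (t ≤ n ∧ t % 2 = n % 2) ∨ (n % 2 = 0 ∧ 2 * t ≤ n) := by
  obtain ⟨k, rfl⟩ := hdvd
  rcases Nat.even_or_odd' k with ⟨r, rfl | rfl⟩
  · have : 0 < r := Nat.pos_of_ne_zero (by rintro rfl; simp at hm)
    right
    constructor
    · rw [← hpar, mul_left_comm, Nat.mul_mod_right]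
    · nlinarith
  · left
    constructor
    · nlinarith
    · rw [← hpar, mul_add, mul_one, Nat.add_mod, mul_left_comm, Nat.mul_mod_right, zero_add,
        Nat.mod_mod]

theorem IsCyclicIntervalColoring.bounds {n t : ℕ} [NeZero n] {φ : ZMod n → ℕ}
    (h : IsCyclicIntervalColoring n t φ) :
    2 ≤ t ∧ ((n % 2 = 0 ∧ t ≤ n / 2 + 1) ∨ (t ≤ n ∧ t % 2 = n % 2)) := by
  obtain ⟨hmem, hsurj, hne, hadj⟩ := h
  have ht : 2 ≤ t := by
    have := hmem 0; have := hmem (0 + 1); have := hne 0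
    simp only [mem_Icc] at *
    omega
  have : NeZero t := ⟨by omega⟩
  obtain ⟨L, hL0, hL, hLφ⟩ :=
    exists_lift_of_cyclicallyAdjacent (t := t) (fun j : ℕ => φ j) fun j => by
      rw [Nat.cast_succ]; exact hadj j
  have hper : (t : ℤ) ∣ L n := (ZMod.intCast_zmod_eq_zero_iff_dvd _ _).mp (by simpa using hLφ n)
  have hpar := two_dvd_sub_of_unit_steps hL n
  have hlen := abs_sub_le_of_unit_steps hL (Nat.zero_le n)
  rw [hL0] at hpar
  rw [hL0, sub_zero, Int.abs_eq_natAbs] at hlen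
  refine ⟨ht, ?_⟩
  rcases eq_or_ne (L n) 0 with hclosed | hopen
  · refine .inl ⟨by omega, le_of_closed_unit_steps hL (by rw [hclosed, hL0]) fun r => ?_⟩
    obtain ⟨c, hc, hcr⟩ := ZMod.exists_mem_Icc_natCast_eq (r + (φ 0 : ZMod t))
    obtain ⟨i, rfl⟩ := hsurj c hc
    exact ⟨i.val, i.val_lt, by rw [hLφ, ZMod.natCast_zmod_val, hcr, Nat.cast_zero]; ring⟩
  · rcases mod_two_eq_or_two_mul_le_of_dvd (n := n) (Int.natAbs_pos.mpr hopen)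
      (Int.natCast_dvd.mp hper) (by omega) (by omega) with h | h
    · exact .inr h
    · exact .inl ⟨h.1, by omega⟩

lemma exists_isCyclicIntervalColoring_of_nat {n t : ℕ} [NeZero n] (ht : 2 ≤ t) (f : ℕ → ℕ)
    (hmem : ∀ j < n, f j ∈ Icc 1 t) (hsurj : ∀ c ∈ Icc 1 t, ∃ j < n, f j = c)
    (hstep : ∀ j, j + 1 < n → CyclicallyAdjacent t (f j) (f (j + 1)))
    (hwrap : CyclicallyAdjacent t (f (n - 1)) (f 0)) :
    ∃ φ : ZMod n → ℕ, IsCyclicIntervalColoring n t φ := by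
  have hadj (i : ZMod n) : CyclicallyAdjacent t (f i.val) (f (i + 1).val) := by
    have hval : (i + 1).val = (i.val + 1) % n := by
      rw [ZMod.val_add, ZMod.val_one_eq_one_mod, Nat.add_mod_mod]
    rcases Nat.lt_or_ge (i.val + 1) n with h | h
    · rw [hval, Nat.mod_eq_of_lt h]
      exact hstep _ h
    · have hlast : i.val + 1 = n := le_antisymm i.val_lt h
      rw [hval, hlast, Nat.mod_self]
      convert hwrap using 2
      omega
  refine ⟨fun i => f i.val, fun i => hmem _ i.val_lt, fun c hc => ?_, fun i => ?_, hadj⟩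
  · obtain ⟨j, hj, rfl⟩ := hsurj c hc
    exact ⟨j, by simp only [ZMod.val_cast_of_lt hj]⟩
  · have := hmem _ i.val_lt
    have := hmem _ (i + 1).val_lt
    have := hadj i
    simp only [CyclicallyAdjacent, mem_Icc] at *
    omega

lemma exists_isCyclicIntervalColoring_of_mod_two_eq {n t : ℕ} (ht : 2 ≤ t) (htn : t ≤ n)
    (hpar : t % 2 = n % 2) : ∃ φ : ZMod n → ℕ, IsCyclicIntervalColoring n t φ := by
  have : NeZero n := ⟨by omega⟩
  obtain ⟨s, rfl⟩ : ∃ s, n = 2 * s + t := ⟨(n - t) / 2, by omega⟩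
  -- the colors 1, 2, 1, 2, …, 1, 2 (`2 * s` edges), followed by 1, 2, …, t
  refine exists_isCyclicIntervalColoring_of_nat ht
    (fun j => if j < 2 * s then 1 + j % 2 else j + 1 - 2 * s) ?_ ?_ ?_ ?_
  · intro j _
    simp only [mem_Icc]
    split_ifs <;> omega
  · intro c hc
    rw [mem_Icc] at hc
    exact ⟨2 * s + c - 1, by omega, by split_ifs <;> omega⟩
  · intro j _
    simp only [CyclicallyAdjacent]
    split_ifs <;> omega
  · simp only [CyclicallyAdjacent]
    split_ifs <;> omega

lemma exists_isCyclicIntervalColoring_of_le_half {n t : ℕ} (hn : n % 2 = 0) (ht : 2 ≤ t)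
    (htn : t ≤ n / 2 + 1) : ∃ φ : ZMod n → ℕ, IsCyclicIntervalColoring n t φ := by
  have : NeZero n := ⟨by omega⟩
  -- the colors 1, 2, …, t, then t - 1, …, 2, followed by 1, 2, 1, 2, …, 1, 2
  refine exists_isCyclicIntervalColoring_of_nat ht
    (fun j => if j < t then j + 1 else if j < 2 * t - 2 then 2 * t - 1 - j else 1 + j % 2)
    ?_ ?_ ?_ ?_
  · intro j _
    simp only [mem_Icc]
    split_ifs <;> omega
  · intro c hc
    rw [mem_Icc] at hc
    exact ⟨c - 1, by omega, by split_ifs <;> omega⟩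
  · intro j _
    simp only [CyclicallyAdjacent]
    split_ifs <;> omega
  · simp only [CyclicallyAdjacent]
    split_ifs <;> omega

theorem exists_isCyclicIntervalColoring_iff {n t : ℕ} [NeZero n] :
    (0 < t ∧ ∃ φ : ZMod n → ℕ, IsCyclicIntervalColoring n t φ) ↔
      2 ≤ t ∧ ((n % 2 = 0 ∧ t ≤ n / 2 + 1) ∨ (t ≤ n ∧ t % 2 = n % 2)) := by
  refine ⟨fun ⟨_, _, hφ⟩ => hφ.bounds, fun ⟨ht, h⟩ => ⟨by omega, ?_⟩⟩
  rcases h with ⟨hn, htn⟩ | ⟨htn, hpar⟩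
  · exact exists_isCyclicIntervalColoring_of_le_half hn ht htn
  · exact exists_isCyclicIntervalColoring_of_mod_two_eq ht htn hpar

/-- For `n ≥ 5`, the set `Θ(C(n))` of positive integers `t` for which `C(n)`
admits a cyclically interval `t`-coloring equals the odd `t` in `[3, n]` if `n`
is odd, and `[2, n/2 + 1] ∪ {even t : n/2 + 3 - ε(n/2) ≤ t ≤ n}` if `n` is even. -/
theorem statement3 (n : ℕ) (hn : 5 ≤ n) :
    {t : ℕ | 0 < t ∧ ∃ φ : ZMod n → ℕ, IsCyclicIntervalColoring n t φ} =
      if Odd n then {t : ℕ | Odd t ∧ 3 ≤ t ∧ t ≤ n}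
      else {t : ℕ | 2 ≤ t ∧ t ≤ n / 2 + 1} ∪
           {t : ℕ | Even t ∧ n / 2 + 3 - eps (n / 2) ≤ t ∧ t ≤ n} := by
  have : NeZero n := ⟨by omega⟩
  ext t
  rw [Set.mem_ofPred_eq, exists_isCyclicIntervalColoring_iff]
  split_ifs with hodd <;>
    simp only [Set.mem_union, Set.mem_ofPred_eq, eps, Nat.odd_iff, Nat.even_iff] at hodd ⊢
  · omega
  · split_ifs <;> omega
end

section
/- For every odd integer n ≥ 5 and every integer t, the simple cycle C(n) admits a cyclically interval t-coloring if and only if t is odd and 3 ≤ t ≤ n. -/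
/-- For odd `n ≥ 5`, the cycle `C(n)` admits a cyclically interval `t`-coloring
iff `t` is odd and `3 ≤ t ≤ n`. -/
theorem statement4 (n : ℕ) (hn : 5 ≤ n) (hodd : Odd n) (t : ℕ) :
    (∃ φ : ZMod n → ℕ, IsCyclicIntervalColoring n t φ) ↔
      (Odd t ∧ 3 ≤ t ∧ t ≤ n) := by
  haveI : NeZero n := ⟨by omega⟩
  haveI : Fact (1 < n) := ⟨by omega⟩
  constructor
  · rintro ⟨φ, h1, h2, h3, h4⟩
    have hto : Odd t := by
      rw [Nat.odd_iff]
      by_contra h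
      have ht2 : t % 2 = 0 := by omega
      have step : ∀ i : ZMod n, (φ i + φ (i + 1)) % 2 = 1 := by
        intro i
        rcases h4 i with h | h | ⟨ha, hb⟩ | ⟨ha, hb⟩ <;> omega
      have key : ∀ k : ℕ, φ ((k : ZMod n)) % 2 = (φ 0 + k) % 2 := by
        intro k
        induction k with
        | zero => simp
        | succ k ih =>
          have hs := step ((k : ZMod n))
          push_cast
          omega
      have hk := key n
      rw [ZMod.natCast_self] at hk
      obtain ⟨a, ha⟩ := hodd
      omega
    refine ⟨hto, ?_, ?_⟩
    · have m0 := h1 0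
      have m1 := h1 (0 + 1)
      have hne := h3 0
      simp only [Finset.mem_Icc] at m0 m1
      obtain ⟨a, ha⟩ := hto
      omega
    · have hsub : Finset.Icc 1 t ⊆ Finset.image φ Finset.univ := by
        intro c hc
        obtain ⟨i, hi⟩ := h2 c hc
        exact Finset.mem_image.2 ⟨i, Finset.mem_univ i, hi⟩
      have hc1 : (Finset.Icc 1 t).card = t := by simp
      have hc2 : (Finset.univ : Finset (ZMod n)).card = n := by
        simp [ZMod.card]
      have hle1 := Finset.card_le_card hsub
      have hle2 := Finset.card_image_le (f := φ) (s := (Finset.univ : Finset (ZMod n)))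
      omega
  · rintro ⟨hto, ht3, htn⟩
    obtain ⟨a, ha⟩ := hodd
    obtain ⟨b, hb⟩ := hto
    set φ : ZMod n → ℕ :=
      fun x => if x.val < t then x.val + 1
        else if (x.val - t) % 2 = 0 then t - 1 else t with hφdef
    have hφ : ∀ i : ZMod n,
        φ i = if i.val < t then i.val + 1
          else if (i.val - t) % 2 = 0 then t - 1 else t := fun i => rfl
    have hstep : ∀ i : ZMod n,
        (φ (i + 1) = φ i + 1 ∨ φ i = φ (i + 1) + 1 ∨
          (φ i = 1 ∧ φ (i + 1) = t) ∨ (φ i = t ∧ φ (i + 1) = 1)) ∧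
        φ i ≠ φ (i + 1) := by
      intro i
      have hv : i.val < n := ZMod.val_lt i
      have h1v : (i + 1).val = (i.val + 1) % n := by
        rw [ZMod.val_add, ZMod.val_one]
      rw [hφ i, hφ (i + 1), h1v]
      by_cases hc : i.val + 1 = n
      · have h0 : (i.val + 1) % n = 0 := by rw [hc, Nat.mod_self]
        rw [h0]
        split_ifs <;> omega
      · have h0 : (i.val + 1) % n = i.val + 1 := Nat.mod_eq_of_lt (by omega)
        rw [h0]
        split_ifs <;> omega
    refine ⟨φ, ?_, ?_, fun i => (hstep i).2, fun i => (hstep i).1⟩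
    · intro i
      have hv : i.val < n := ZMod.val_lt i
      rw [hφ i]
      simp only [Finset.mem_Icc]
      split_ifs <;> omega
    · intro c hc
      simp only [Finset.mem_Icc] at hc
      refine ⟨((c - 1 : ℕ) : ZMod n), ?_⟩
      rw [hφ, ZMod.val_cast_of_lt (by omega), if_pos (by omega)]
      omega
end

section
/- For every integer n ≥ 6 with n ≡ 2 (mod 4) (so that n/2 is odd) and every integer t, the simple cycle C(n) admits a cyclically interval t-coloring if and only if either 2 ≤ t ≤ n/2 + 1, or t is even and n/2 + 3 ≤ t ≤ n. -/
/-- Build a coloring from a walk `h : ℕ → ℕ` on indices `0..n-1`. -/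
lemma coloring_of_walk (n t : ℕ) (hn : 2 ≤ n) (ht : 2 ≤ t) (h : ℕ → ℕ)
    (hlt : ∀ k, k < n → h k < t)
    (hsurj : ∀ c, 1 ≤ c → c ≤ t → ∃ k, k < n ∧ h k + 1 = c)
    (hstep : ∀ k, k + 1 < n →
      (h (k+1) = h k + 1 ∨ h k = h (k+1) + 1 ∨
        (h k = 0 ∧ h (k+1) + 1 = t) ∨ (h k + 1 = t ∧ h (k+1) = 0)))
    (hseam : h (n-1) = h 0 + 1 ∨ h 0 = h (n-1) + 1 ∨
        (h (n-1) = 0 ∧ h 0 + 1 = t) ∨ (h (n-1) + 1 = t ∧ h 0 = 0)) :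
    ∃ φ : ZMod n → ℕ, IsCyclicIntervalColoring n t φ := by
  haveI : NeZero n := ⟨by omega⟩
  refine ⟨fun i => h i.val + 1, ?_, ?_, ?_, ?_⟩
  · intro i
    simp only [Finset.mem_Icc]
    have := hlt i.val (ZMod.val_lt i)
    omega
  · intro c hc
    simp only [Finset.mem_Icc] at hc
    obtain ⟨k, hk, hkc⟩ := hsurj c hc.1 hc.2
    refine ⟨(k : ZMod n), ?_⟩
    show h (k : ZMod n).val + 1 = c
    rwa [ZMod.val_natCast_of_lt hk]
  · intro i
    have hval : (i + 1).val = if i.val = n - 1 then 0 else i.val + 1 := by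
      rw [ZMod.val_add, ZMod.val_one'' (by omega)]
      rcases Nat.lt_or_ge i.val (n-1) with hc | hc
      · rw [Nat.mod_eq_of_lt (by have := ZMod.val_lt i; omega)]
        split <;> omega
      · have h1 : i.val = n - 1 := by have := ZMod.val_lt i; omega
        rw [h1]
        have h2 : n - 1 + 1 = n := by omega
        rw [h2, Nat.mod_self]
        split <;> omega
    have hi := ZMod.val_lt i
    rcases Nat.lt_or_ge i.val (n-1) with hc | hc
    · have : (i+1).val = i.val + 1 := by rw [hval]; split <;> omega
      show h i.val + 1 ≠ h (i+1).val + 1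
      rw [this]
      have := hstep i.val (by omega)
      omega
    · have hlast : i.val = n - 1 := by omega
      have : (i+1).val = 0 := by rw [hval]; split <;> omega
      show h i.val + 1 ≠ h (i+1).val + 1
      rw [this, hlast]
      omega
  · intro i
    have hval : (i + 1).val = if i.val = n - 1 then 0 else i.val + 1 := by
      rw [ZMod.val_add, ZMod.val_one'' (by omega)]
      rcases Nat.lt_or_ge i.val (n-1) with hc | hc
      · rw [Nat.mod_eq_of_lt (by have := ZMod.val_lt i; omega)]
        split <;> omega
      · have h1 : i.val = n - 1 := by have := ZMod.val_lt i; omega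
        rw [h1]
        have h2 : n - 1 + 1 = n := by omega
        rw [h2, Nat.mod_self]
        split <;> omega
    have hi := ZMod.val_lt i
    show h (i+1).val + 1 = h i.val + 1 + 1 ∨ h i.val + 1 = h (i+1).val + 1 + 1 ∨
      (h i.val + 1 = 1 ∧ h (i+1).val + 1 = t) ∨ (h i.val + 1 = t ∧ h (i+1).val + 1 = 1)
    rcases Nat.lt_or_ge i.val (n-1) with hc | hc
    · have he : (i+1).val = i.val + 1 := by rw [hval]; split <;> omega
      rw [he]
      have := hstep i.val (by omega)
      omega
    · have hlast : i.val = n - 1 := by omega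
      have he : (i+1).val = 0 := by rw [hval]; split <;> omega
      rw [he, hlast]
      omega

lemma construction_A (n t : ℕ) (hn : 6 ≤ n) (hmod : n % 4 = 2) (ht : 2 ≤ t)
    (ht2 : t ≤ n / 2 + 1) :
    ∃ φ : ZMod n → ℕ, IsCyclicIntervalColoring n t φ := by
  refine coloring_of_walk n t (by omega) ht
    (fun k => if k < t then k else if k < 2*t - 1 then 2*t - 2 - k else k % 2)
    ?_ ?_ ?_ ?_
  · intro k hk
    beta_reduce; split_ifs <;> omega
  · intro c hc1 hc2
    exact ⟨c - 1, by omega, by beta_reduce; split_ifs <;> omega⟩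
  · intro k hk
    beta_reduce; split_ifs <;> omega
  · beta_reduce; split_ifs <;> omega

lemma construction_B (n t : ℕ) (hn : 6 ≤ n) (hmod : n % 4 = 2) (ht : 2 ≤ t)
    (hte : t % 2 = 0) (htn : t ≤ n) :
    ∃ φ : ZMod n → ℕ, IsCyclicIntervalColoring n t φ := by
  refine coloring_of_walk n t (by omega) ht
    (fun k => if k < n - t then k % 2 else k - (n - t))
    ?_ ?_ ?_ ?_
  · intro k hk
    beta_reduce; split_ifs <;> omega
  · intro c hc1 hc2
    exact ⟨n - t + c - 1, by omega, by beta_reduce; split_ifs <;> omega⟩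
  · intro k hk
    beta_reduce; split_ifs <;> omega
  · beta_reduce; split_ifs <;> omega

lemma odd_t_bound (n t : ℕ) (hn : 6 ≤ n) (hne : n % 2 = 0) (htodd : t % 2 = 1)
    (ht : 2 ≤ t) (φ : ZMod n → ℕ) (H : IsCyclicIntervalColoring n t φ) :
    2 * t ≤ n + 2 := by
  haveI : NeZero n := ⟨by omega⟩
  haveI : NeZero t := ⟨by omega⟩
  obtain ⟨h1, h2, h3, h4⟩ := H
  set σ : ℕ → ℤ := fun k =>
    if ((φ ((k : ZMod n) + 1) : ZMod t) = (φ (k : ZMod n) : ZMod t) + 1) then 1 else -1 with hσdef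
  set g : ℕ → ℤ := fun k => ∑ j ∈ Finset.range k, σ j with hgdef
  have hg0 : g 0 = 0 := by simp [hgdef]
  have hgs : ∀ k, g (k + 1) = g k + σ k := by
    intro k
    simp [hgdef, Finset.sum_range_succ]
  have hσ : ∀ k, σ k = 1 ∨ σ k = -1 := by
    intro k
    simp only [hσdef]
    split <;> simp
  -- congruence mod t
  have hcong : ∀ k : ℕ, ((g k : ZMod t)) =
      (φ ((k : ZMod n)) : ZMod t) - (φ (0 : ZMod n) : ZMod t) := by
    intro k
    induction k with
    | zero => simp [hg0]
    | succ k ih =>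
      rw [hgs]
      push_cast
      rw [ih]
      have hstep : ((σ k : ZMod t)) =
          (φ ((k : ZMod n) + 1) : ZMod t) - (φ (k : ZMod n) : ZMod t) := by
        simp only [hσdef]
        split
        · rename_i hT
          rw [hT]; push_cast; ring
        · rename_i hF
          rcases h4 (k : ZMod n) with hc | hc | hc | hc
          · exact absurd (by exact_mod_cast congrArg (fun x : ℕ => (x : ZMod t)) hc) hF
          · have : (φ ((k : ZMod n)) : ZMod t) = (φ ((k : ZMod n) + 1) : ZMod t) + 1 := by
              exact_mod_cast congrArg (fun x : ℕ => (x : ZMod t)) hc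
            rw [this]; push_cast; ring
          · rw [hc.1, hc.2]
            push_cast
            rw [ZMod.natCast_self]
            ring
          · exfalso
            apply hF
            rw [hc.1, hc.2]
            push_cast
            rw [ZMod.natCast_self]
            ring
      rw [hstep]
      ring
  -- parity
  have hpar : ∀ k : ℕ, (g k + k) % 2 = 0 := by
    intro k
    induction k with
    | zero => simp [hg0]
    | succ k ih =>
      have h5 := hgs k
      rcases hσ k with h6 | h6 <;> push_cast <;> omega
  -- walk bound
  have hbd : ∀ a b : ℕ, a ≤ b → g b - g a ≤ (b : ℤ) - a ∧ g a - g b ≤ (b : ℤ) - a := by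
    intro a b hab
    induction b, hab using Nat.le_induction with
    | base => simp
    | succ b hab ih =>
      have h5 := hgs b
      rcases hσ b with h6 | h6 <;> push_cast <;> omega
  -- covering
  have hcover : ∀ y : ZMod t, ∃ k, k < n ∧ ((g k : ZMod t)) = y := by
    intro y
    set c0 : ZMod t := y + (φ (0 : ZMod n) : ZMod t) with hc0
    set c : ℕ := if c0.val = 0 then t else c0.val with hc
    have hvlt : c0.val < t := ZMod.val_lt c0
    have hcmem : c ∈ Finset.Icc 1 t := by
      simp only [Finset.mem_Icc, hc]
      split <;> omega
    have hccast : ((c : ZMod t)) = c0 := by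
      simp only [hc]
      split
      · rename_i h0
        rw [ZMod.natCast_self]
        exact ((ZMod.val_eq_zero c0).mp h0).symm
      · exact ZMod.natCast_rightInverse c0
    obtain ⟨i, hi⟩ := h2 c hcmem
    refine ⟨i.val, ZMod.val_lt i, ?_⟩
    rw [hcong i.val, ZMod.natCast_rightInverse i, hi, hccast, hc0]
    ring
  -- cardinality
  set S : Finset ℤ := (Finset.range n).image g with hS
  have hSne : S.Nonempty := ⟨g 0, Finset.mem_image.mpr ⟨0, Finset.mem_range.mpr (by omega), rfl⟩⟩
  have himg : Finset.image (fun z : ℤ => ((z : ZMod t))) S = Finset.univ := by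
    apply Finset.eq_univ_of_forall
    intro y
    obtain ⟨k, hk, hky⟩ := hcover y
    exact Finset.mem_image.mpr ⟨g k, Finset.mem_image.mpr ⟨k, Finset.mem_range.mpr hk, rfl⟩, hky⟩
  have hcard1 : t ≤ S.card := by
    have h5 : (Finset.univ : Finset (ZMod t)).card = t := by
      rw [Finset.card_univ, ZMod.card]
    calc t = (Finset.image (fun z : ℤ => ((z : ZMod t))) S).card := by rw [himg, h5]
    _ ≤ S.card := Finset.card_image_le
  have hsub : S ⊆ Finset.Icc (S.min' hSne) (S.max' hSne) := by
    intro z hz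
    exact Finset.mem_Icc.mpr ⟨S.min'_le z hz, S.le_max' z hz⟩
  have hcard2 : (t : ℤ) ≤ S.max' hSne - S.min' hSne + 1 := by
    have h5 := Finset.card_le_card hsub
    rw [Int.card_Icc] at h5
    omega
  obtain ⟨a, ha, hga⟩ : ∃ a, a < n ∧ g a = S.max' hSne := by
    obtain ⟨a, ha, hga⟩ := Finset.mem_image.mp (S.max'_mem hSne)
    exact ⟨a, Finset.mem_range.mp ha, hga⟩
  obtain ⟨b, hb, hgb⟩ : ∃ b, b < n ∧ g b = S.min' hSne := by
    obtain ⟨b, hb, hgb⟩ := Finset.mem_image.mp (S.min'_mem hSne)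
    exact ⟨b, Finset.mem_range.mp hb, hgb⟩
  -- closure
  have hgn : ((g n : ZMod t)) = 0 := by
    rw [hcong n, ZMod.natCast_self]
    ring
  have hdvd : (t : ℤ) ∣ g n := (ZMod.intCast_zmod_eq_zero_iff_dvd _ _).mp hgn
  obtain ⟨c, hcn⟩ := hdvd
  have hgneven : (2 : ℤ) ∣ g n := by
    have := hpar n
    omega
  have hceven : (2 : ℤ) ∣ c := by
    rcases (Int.Prime.dvd_mul' Nat.prime_two (hcn ▸ hgneven)) with h5 | h5
    · exfalso
      have : (2 : ℤ) ∣ (t : ℤ) := h5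
      omega
    · exact h5
  by_cases hc0 : c = 0
  · -- g n = 0, min/max argument
    have hgn0 : g n = 0 := by rw [hcn, hc0]; ring
    rcases le_total a b with hab | hab
    · have h5 := hbd a b hab
      have h6 := hbd 0 a (by omega)
      have h7 := hbd b n (by omega)
      rw [hg0, hgn0] at *
      rw [hga] at *
      rw [hgb] at *
      push_cast at *
      omega
    · have h5 := hbd b a hab
      have h6 := hbd 0 b (by omega)
      have h7 := hbd a n (by omega)
      rw [hg0, hgn0] at *
      rw [hga] at *
      rw [hgb] at *
      push_cast at *
      omega
  · -- |g n| ≥ 2 t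
    have h5 : 2 * (t : ℤ) ≤ |g n| := by
      rw [hcn, abs_mul]
      have h6 : (2 : ℤ) ≤ |c| := by
        rcases hceven with ⟨d, hd⟩
        rcases le_or_gt 0 c with h | h
        · rw [abs_of_nonneg h]; omega
        · rw [abs_of_neg h]; omega
      have h7 : |(t : ℤ)| = t := abs_of_nonneg (by positivity)
      rw [h7]
      nlinarith [abs_nonneg c]
    have h8 := hbd 0 n (by omega)
    rw [hg0] at h8
    rcases abs_cases (g n) with ⟨h9, _⟩ | ⟨h9, _⟩ <;> omega

/-- For `n ≥ 6` with `n ≡ 2 (mod 4)`, the cycle `C(n)` admits a cyclically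
interval `t`-coloring iff `2 ≤ t ≤ n/2 + 1`, or `t` is even and
`n/2 + 3 ≤ t ≤ n`. -/
theorem statement5 (n : ℕ) (hn : 6 ≤ n) (hmod : n % 4 = 2) (t : ℕ) :
    (∃ φ : ZMod n → ℕ, IsCyclicIntervalColoring n t φ) ↔
      ((2 ≤ t ∧ t ≤ n / 2 + 1) ∨ (Even t ∧ n / 2 + 3 ≤ t ∧ t ≤ n)) := by
  haveI : NeZero n := ⟨by omega⟩
  constructor
  · rintro ⟨φ, H⟩
    obtain ⟨h1, h2, h3, h4⟩ := H
    -- t ≥ 2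
    have ht2 : 2 ≤ t := by
      have a1 := h1 (0 : ZMod n)
      have a2 := h1 ((0 : ZMod n) + 1)
      have a3 := h3 (0 : ZMod n)
      simp only [Finset.mem_Icc] at a1 a2
      omega
    -- t ≤ n
    have htn : t ≤ n := by
      have hsub : Finset.Icc 1 t ⊆ Finset.image φ Finset.univ := by
        intro c hc
        obtain ⟨i, hi⟩ := h2 c hc
        exact Finset.mem_image.mpr ⟨i, Finset.mem_univ i, hi⟩
      have h5 := Finset.card_le_card hsub
      rw [Nat.card_Icc] at h5
      have h6 : (Finset.image φ Finset.univ).card ≤ (Finset.univ : Finset (ZMod n)).card :=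
        Finset.card_image_le
      rw [Finset.card_univ, ZMod.card] at h6
      omega
    by_cases hc : t ≤ n / 2 + 1
    · left; exact ⟨ht2, hc⟩
    · right
      have hev : Even t := by
        rw [Nat.even_iff]
        by_contra hodd
        have := odd_t_bound n t hn (by omega) (by omega) ht2 φ ⟨h1, h2, h3, h4⟩
        omega
      refine ⟨hev, ?_, htn⟩
      rw [Nat.even_iff] at hev
      omega
  · rintro (⟨h5, h6⟩ | ⟨hev, h5, h6⟩)
    · exact construction_A n t hn hmod h5 h6
    · rw [Nat.even_iff] at hev
      exact construction_B n t hn hmod (by omega) hev h6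
end

section
/- For every integer n ≥ 8 with n ≡ 0 (mod 4) (so that n/2 is even) and every integer t, the simple cycle C(n) admits a cyclically interval t-coloring if and only if either 2 ≤ t ≤ n/2 + 1, or t is even and n/2 + 2 ≤ t ≤ n. -/
/-- The allowed pair of colors on consecutive edges. -/
def CStep (t a b : ℕ) : Prop :=
  b = a + 1 ∨ a = b + 1 ∨ (a = 1 ∧ b = t) ∨ (a = t ∧ b = 1)

lemma build (n t : ℕ) (hn : 2 ≤ n) (ht : 2 ≤ t) (g : ℕ → ℕ)
    (hrange : ∀ j, j < n → 1 ≤ g j ∧ g j ≤ t)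
    (hsurj : ∀ c, 1 ≤ c → c ≤ t → ∃ j, j < n ∧ g j = c)
    (hstep : ∀ j, j + 1 < n → CStep t (g j) (g (j + 1)))
    (hwrap : CStep t (g (n - 1)) (g 0)) :
    ∃ φ : ZMod n → ℕ, IsCyclicIntervalColoring n t φ := by
  haveI : NeZero n := ⟨by omega⟩
  haveI : Fact (1 < n) := ⟨by omega⟩
  refine ⟨fun i => g i.val, ?_, ?_, ?_, ?_⟩
  · intro i
    have := hrange i.val (ZMod.val_lt i)
    simp only [Finset.mem_Icc]
    omega
  · intro c hc
    simp only [Finset.mem_Icc] at hc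
    obtain ⟨j, hj, hgj⟩ := hsurj c hc.1 hc.2
    exact ⟨(j : ZMod n), by simpa [ZMod.val_natCast, Nat.mod_eq_of_lt hj] using hgj⟩
  · intro i
    have hv : (i + 1).val = (i.val + 1) % n := by
      rw [ZMod.val_add, ZMod.val_one]
    have hlt := ZMod.val_lt i
    by_cases h : i.val + 1 < n
    · have hstep' := hstep i.val h
      have h1 := hrange i.val hlt
      have h2 := hrange (i.val + 1) h
      simp only [hv, Nat.mod_eq_of_lt h]
      rcases hstep' with h' | h' | h' | h' <;> omega
    · have hiv : i.val = n - 1 := by omega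
      have hv0 : (i + 1).val = 0 := by
        rw [hv, hiv, Nat.sub_add_cancel (by omega), Nat.mod_self]
      have h1 := hrange (n - 1) (by omega)
      have h2 := hrange 0 (by omega)
      simp only [hv0, hiv]
      rcases hwrap with h' | h' | h' | h' <;> omega
  · intro i
    have hv : (i + 1).val = (i.val + 1) % n := by
      rw [ZMod.val_add, ZMod.val_one]
    have hlt := ZMod.val_lt i
    by_cases h : i.val + 1 < n
    · have hstep' := hstep i.val h
      simp only [hv, Nat.mod_eq_of_lt h]
      exact hstep'
    · have hiv : i.val = n - 1 := by omega
      have hv0 : (i + 1).val = 0 := by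
        rw [hv, hiv, Nat.sub_add_cancel (by omega), Nat.mod_self]
      simp only [hv0, hiv]
      exact hwrap

lemma suff1 (n t : ℕ) (hn : 8 ≤ n) (hne : n % 2 = 0) (ht2 : 2 ≤ t) (ht : t ≤ n / 2 + 1) :
    ∃ φ : ZMod n → ℕ, IsCyclicIntervalColoring n t φ := by
  apply build n t (by omega) ht2
    (fun j => if j < t then j + 1 else if j < 2 * t - 1 then 2 * t - 1 - j
      else if j % 2 = 0 then 1 else 2)
  · intro j hj; split_ifs <;> omega
  · intro c h1 h2
    refine ⟨c - 1, by omega, ?_⟩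
    split_ifs <;> omega
  · intro j hj
    unfold CStep
    split_ifs <;> omega
  · unfold CStep
    split_ifs <;> omega

lemma suff2 (n t : ℕ) (hn : 8 ≤ n) (hne : n % 2 = 0) (hte : t % 2 = 0)
    (ht1 : n / 2 + 2 ≤ t) (ht : t ≤ n) :
    ∃ φ : ZMod n → ℕ, IsCyclicIntervalColoring n t φ := by
  set m := (n - t) / 2 with hm
  have hnm : n = t + 2 * m := by omega
  have hmt : 2 * m + 4 ≤ t := by omega
  apply build n t (by omega) (by omega)
    (fun j => if j < t then j + 1 else if j < t + m then j - t + 1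
      else if j < n - 1 then n - 1 - j else t)
  · intro j hj; split_ifs <;> omega
  · intro c h1 h2
    refine ⟨c - 1, by omega, ?_⟩
    split_ifs <;> omega
  · intro j hj
    unfold CStep
    split_ifs <;> omega
  · unfold CStep
    split_ifs <;> omega


section
variable (n t : ℕ) (F : ℕ → ℕ)

lemma no_odd_aux (hn : 8 ≤ n) (hne : n % 2 = 0) (ht : n / 2 + 2 ≤ t)
    (hodd : t % 2 = 1)
    (hFrange : ∀ j, 1 ≤ F j ∧ F j ≤ t)
    (hFstep : ∀ j, F (j + 1) = F j + 1 ∨ F j = F (j + 1) + 1 ∨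
      (F j = 1 ∧ F (j + 1) = t) ∨ (F j = t ∧ F (j + 1) = 1))
    (hFne : ∀ j, F j ≠ F (j + 1))
    (hFn : F n = F 0)
    (hFsurj : ∀ c, 1 ≤ c → c ≤ t → ∃ j, j < n ∧ F j = c) : False := by
  classical
  set d : ℕ → ℤ := fun j => if F (j + 1) = F j + 1 ∨ (F j = t ∧ F (j + 1) = 1) then 1 else -1
    with hd
  have hd1 : ∀ j, d j = 1 ∨ d j = -1 := by
    intro j
    by_cases hc : F (j + 1) = F j + 1 ∨ (F j = t ∧ F (j + 1) = 1)
    · left; simp only [hd]; rw [if_pos hc]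
    · right; simp only [hd]; rw [if_neg hc]
  set S : ℕ → ℤ := fun j => ∑ i ∈ Finset.range j, d i with hS
  have hS0 : S 0 = 0 := by simp [hS]
  have hSsucc : ∀ j, S (j + 1) = S j + d j := by
    intro j; simp only [hS]; exact Finset.sum_range_succ d j
  have hkey : ∀ j, ∃ k : ℤ, (F (j + 1) : ℤ) = F j + d j + k * t := by
    intro j
    have hs := hFstep j
    have hne2 := hFne j
    have h1 := hFrange j
    have h2 := hFrange (j + 1)
    by_cases hc : F (j + 1) = F j + 1 ∨ (F j = t ∧ F (j + 1) = 1)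
    · have hdj : d j = 1 := by simp only [hd]; rw [if_pos hc]
      rw [hdj]
      rcases hc with hc | hc
      · exact ⟨0, by omega⟩
      · exact ⟨-1, by obtain ⟨e1, e2⟩ := hc; omega⟩
    · have hdj : d j = -1 := by simp only [hd]; rw [if_neg hc]
      rw [hdj]
      push_neg at hc
      rcases hs with hs | hs | hs | hs
      · exact absurd hs hc.1
      · exact ⟨0, by omega⟩
      · exact ⟨1, by obtain ⟨e1, e2⟩ := hs; omega⟩
      · exact absurd hs.2 (hc.2 hs.1)
  have hlift : ∀ j, ∃ k : ℤ, (F j : ℤ) = F 0 + S j + k * t := by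
    intro j
    induction j with
    | zero => exact ⟨0, by rw [hS0]; ring⟩
    | succ j ih =>
      obtain ⟨k, hk⟩ := ih
      obtain ⟨k', hk'⟩ := hkey j
      exact ⟨k + k', by rw [hk', hk, hSsucc]; ring⟩
  have hpar : ∀ j, S j % 2 = (j : ℤ) % 2 ∧ -(j : ℤ) ≤ S j ∧ S j ≤ j := by
    intro j
    induction j with
    | zero => simp [hS0]
    | succ j ih =>
      rw [hSsucc]
      rcases hd1 j with h' | h' <;> rw [h'] <;> push_cast <;> omega
  -- S n = 0
  obtain ⟨k0, hk0⟩ := hlift n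
  rw [hFn] at hk0
  have hq : S n = -k0 * t := by linarith
  have hpn := hpar n
  have hSn0 : S n = 0 := by
    have hcases : -k0 = -1 ∨ -k0 = 0 ∨ -k0 = 1 := by
      by_contra hcon
      push_neg at hcon
      have h22 : 2 ≤ -k0 ∨ -k0 ≤ -2 := by omega
      rcases h22 with h22 | h22
      · have := mul_le_mul_of_nonneg_right h22 (show (0:ℤ) ≤ t by omega)
        omega
      · have := mul_le_mul_of_nonneg_right h22 (show (0:ℤ) ≤ t by omega)
        omega
    rcases hcases with hc | hc | hc <;> rw [hc] at hq <;> omega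
  -- counting steps
  have hsum1 : ∀ a b : ℕ, a ≤ b → S b - S a =
      (b : ℤ) - a - 2 * ((Finset.Ico a b).filter (fun i => d i = -1)).card := by
    intro a b hab
    have e1 : S b - S a = ∑ i ∈ Finset.Ico a b, d i := by
      simp only [hS]; rw [Finset.sum_Ico_eq_sub d hab]
    rw [e1]
    have e2 : ∀ i ∈ Finset.Ico a b, d i = 1 - 2 * (if d i = -1 then (1 : ℤ) else 0) := by
      intro i _
      rcases hd1 i with h' | h' <;> rw [h'] <;> norm_num
    rw [Finset.sum_congr rfl e2, Finset.sum_sub_distrib, Finset.sum_const, ← Finset.mul_sum,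
      Finset.sum_boole, Nat.card_Ico]
    simp only [nsmul_eq_mul, mul_one]
    omega
  have hsum2 : ∀ a b : ℕ, a ≤ b → S b - S a =
      2 * ((Finset.Ico a b).filter (fun i => d i = 1)).card - ((b : ℤ) - a) := by
    intro a b hab
    have e1 : S b - S a = ∑ i ∈ Finset.Ico a b, d i := by
      simp only [hS]; rw [Finset.sum_Ico_eq_sub d hab]
    rw [e1]
    have e2 : ∀ i ∈ Finset.Ico a b, d i = 2 * (if d i = 1 then (1 : ℤ) else 0) - 1 := by
      intro i _
      rcases hd1 i with h' | h' <;> rw [h'] <;> norm_num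
    rw [Finset.sum_congr rfl e2, Finset.sum_sub_distrib, Finset.sum_const, ← Finset.mul_sum,
      Finset.sum_boole, Nat.card_Ico]
    simp only [nsmul_eq_mul, mul_one]
    omega
  have hm1 : 2 * ((Finset.Ico 0 n).filter (fun i => d i = -1)).card = n := by
    have := hsum1 0 n (by omega)
    rw [hSn0, hS0] at this
    omega
  have hm2 : 2 * ((Finset.Ico 0 n).filter (fun i => d i = 1)).card = n := by
    have := hsum2 0 n (by omega)
    rw [hSn0, hS0] at this
    omega
  -- max and min of the lifted walk
  set Ss := (Finset.range (n + 1)).image S with hSs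
  have hSne : Ss.Nonempty := ⟨S 0, Finset.mem_image_of_mem S (Finset.mem_range.mpr (by omega))⟩
  set M := Ss.max' hSne with hM
  set L := Ss.min' hSne with hL
  obtain ⟨a, ha, haM⟩ := Finset.mem_image.mp (Ss.max'_mem hSne)
  obtain ⟨b, hb, hbL⟩ := Finset.mem_image.mp (Ss.min'_mem hSne)
  rw [Finset.mem_range] at ha hb
  have hML : M - L ≤ (n / 2 : ℕ) := by
    rcases le_total a b with hab | hab
    · have h1 := hsum1 a b hab
      rw [haM, hbL] at h1
      have h2 : ((Finset.Ico a b).filter (fun i => d i = -1)).card ≤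
          ((Finset.Ico 0 n).filter (fun i => d i = -1)).card :=
        Finset.card_le_card (Finset.filter_subset_filter _
          (Finset.Ico_subset_Ico (by omega) (by omega)))
      have h3 := Finset.card_filter_le (Finset.Ico a b) (fun i => d i = -1)
      rw [Nat.card_Ico] at h3
      omega
    · have h1 := hsum2 b a hab
      rw [haM, hbL] at h1
      have h2 : ((Finset.Ico b a).filter (fun i => d i = 1)).card ≤
          ((Finset.Ico 0 n).filter (fun i => d i = 1)).card :=
        Finset.card_le_card (Finset.filter_subset_filter _
          (Finset.Ico_subset_Ico (by omega) (by omega)))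
      have h3 := Finset.card_filter_le (Finset.Ico b a) (fun i => d i = 1)
      rw [Nat.card_Ico] at h3
      omega
  -- pigeonhole
  set J : ℕ → ℕ := fun c => if hc : ∃ j, j < n ∧ F j = c then hc.choose else 0 with hJ
  have hJspec : ∀ c ∈ Finset.Icc 1 t, J c < n ∧ F (J c) = c := by
    intro c hc
    rw [Finset.mem_Icc] at hc
    have h' := hFsurj c hc.1 hc.2
    simp only [hJ]
    rw [dif_pos h']
    exact h'.choose_spec
  have hmap : ∀ c ∈ Finset.Icc 1 t, S (J c) ∈ Finset.Icc L M := by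
    intro c hc
    have hmem : S (J c) ∈ Ss :=
      Finset.mem_image_of_mem S (Finset.mem_range.mpr (Nat.lt_succ_of_lt (hJspec c hc).1))
    exact Finset.mem_Icc.mpr ⟨Finset.min'_le _ _ hmem, Finset.le_max' _ _ hmem⟩
  have hcard : (Finset.Icc L M).card < (Finset.Icc 1 t).card := by
    rw [Int.card_Icc, Nat.card_Icc]
    omega
  obtain ⟨c1, hc1, c2, hc2, hne12, heq⟩ :=
    Finset.exists_ne_map_eq_of_card_lt_of_maps_to hcard hmap
  obtain ⟨k1, hk1⟩ := hlift (J c1)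
  obtain ⟨k2, hk2⟩ := hlift (J c2)
  rw [(hJspec c1 hc1).2] at hk1
  rw [(hJspec c2 hc2).2] at hk2
  rw [heq] at hk1
  have hdvd : (t : ℤ) ∣ ((c1 : ℤ) - c2) := ⟨k1 - k2, by rw [hk1, hk2]; ring⟩
  rw [Finset.mem_Icc] at hc1 hc2
  have hlt : |(c1 : ℤ) - c2| < t := abs_lt.mpr ⟨by omega, by omega⟩
  have h0 := Int.eq_zero_of_abs_lt_dvd hdvd hlt
  exact hne12 (by omega)

end


/-- For `n ≥ 8` with `n ≡ 0 (mod 4)`, the cycle `C(n)` admits a cyclically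
interval `t`-coloring iff `2 ≤ t ≤ n/2 + 1`, or `t` is even and
`n/2 + 2 ≤ t ≤ n`. -/
theorem statement6 (n : ℕ) (hn : 8 ≤ n) (hmod : n % 4 = 0) (t : ℕ) :
    (∃ φ : ZMod n → ℕ, IsCyclicIntervalColoring n t φ) ↔
      ((2 ≤ t ∧ t ≤ n / 2 + 1) ∨ (Even t ∧ n / 2 + 2 ≤ t ∧ t ≤ n)) := by
  haveI : NeZero n := ⟨by omega⟩
  constructor
  · rintro ⟨φ, hrange, hsurj, hne', hstep⟩
    -- t ≥ 2
    have ht2 : 2 ≤ t := by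
      by_contra hcon
      push_neg at hcon
      interval_cases t
      · have := hrange 0
        simp at this
      · have h0 := hrange 0
        have h1 := hrange (0 + 1)
        simp only [Finset.mem_Icc] at h0 h1
        have := hne' 0
        omega
    -- t ≤ n
    have htn : t ≤ n := by
      classical
      set G : ℕ → ZMod n := fun c => if hc : ∃ i, φ i = c then hc.choose else 0 with hG
      have hGs : ∀ c ∈ Finset.Icc 1 t, φ (G c) = c := by
        intro c hc
        obtain ⟨i, hi⟩ := hsurj c hc
        have h' : ∃ i, φ i = c := ⟨i, hi⟩
        simp only [hG]
        rw [dif_pos h']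
        exact h'.choose_spec
      have hinj : Set.InjOn G (Finset.Icc 1 t) := by
        intro c1 h1 c2 h2 he
        rw [← hGs c1 h1, ← hGs c2 h2, he]
      have := Finset.card_le_card_of_injOn G (fun c _ => Finset.mem_univ (G c)) hinj
      rw [Nat.card_Icc, Finset.card_univ, ZMod.card] at this
      omega
    by_cases hle : t ≤ n / 2 + 1
    · exact Or.inl ⟨ht2, hle⟩
    · push_neg at hle
      refine Or.inr ⟨?_, by omega, htn⟩
      rw [Nat.even_iff]
      by_contra hcon
      have hodd : t % 2 = 1 := by omega
      have hcast : ∀ j : ℕ, ((j : ZMod n) + 1) = ((j + 1 : ℕ) : ZMod n) := by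
        intro j; push_cast; ring
      refine no_odd_aux n t (fun j => φ (j : ZMod n)) hn (by omega) (by omega) hodd
        ?_ ?_ ?_ ?_ ?_
      · intro j
        have := hrange ((j : ℕ) : ZMod n)
        rw [Finset.mem_Icc] at this
        exact this
      · intro j
        have := hstep ((j : ℕ) : ZMod n)
        rwa [hcast j] at this
      · intro j
        have := hne' ((j : ℕ) : ZMod n)
        rwa [hcast j] at this
      · simp
      · intro c h1 h2
        obtain ⟨i, hi⟩ := hsurj c (Finset.mem_Icc.mpr ⟨h1, h2⟩)
        refine ⟨i.val, ZMod.val_lt i, ?_⟩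
        rw [show ((i.val : ℕ) : ZMod n) = i from ZMod.natCast_rightInverse i]
        exact hi
  · rintro (⟨h1, h2⟩ | ⟨he, h1, h2⟩)
    · exact suff1 n t hn (by omega) h1 h2
    · exact suff2 n t hn (by omega) (Nat.even_iff.mp he) h1 h2
end

section
/- For every integer k ≥ 2 and every integer t, the simple cycle C(2k) admits an interval t-coloring if and only if 2 ≤ t ≤ k + 1. -/
/-- An interval `t`-coloring of the simple cycle `C(n)`.
The edges of `C(n)` are indexed by `ZMod n`; edges `i` and `i + 1` are the two
edges incident to a common vertex. The coloring uses colors `1, ..., t`, all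
colors are used, and at each vertex the two incident edges receive consecutive
colors. -/
def IsCycleIntervalColoring (n t : ℕ) (φ : ZMod n → ℕ) : Prop :=
  (∀ i, φ i ∈ Finset.Icc 1 t) ∧
  (∀ c ∈ Finset.Icc 1 t, ∃ i, φ i = c) ∧
  (∀ i : ZMod n, φ (i + 1) = φ i + 1 ∨ φ i = φ (i + 1) + 1)

/-- The explicit zigzag coloring. -/
def cycColor (t j : ℕ) : ℕ :=
  if j + 1 ≤ t then j + 1
  else if j ≤ 2 * t - 2 then 2 * t - 1 - j
  else if j % 2 = 0 then 1 else 2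

lemma cycColor_mem (t j : ℕ) (ht : 2 ≤ t) : cycColor t j ∈ Finset.Icc 1 t := by
  simp only [cycColor, Finset.mem_Icc]
  split_ifs <;> omega

lemma cycColor_step (k t j : ℕ) (ht : 2 ≤ t) (htk : t ≤ k + 1) (hk : 2 ≤ k)
    (hj : j + 1 < 2 * k) :
    cycColor t (j + 1) = cycColor t j + 1 ∨ cycColor t j = cycColor t (j + 1) + 1 := by
  simp only [cycColor]
  split_ifs <;> omega

lemma cycColor_wrap (k t : ℕ) (ht : 2 ≤ t) (htk : t ≤ k + 1) (hk : 2 ≤ k) :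
    cycColor t (2 * k - 1) = cycColor t 0 + 1 := by
  simp only [cycColor]
  split_ifs <;> omega

/-- For every `k ≥ 2`, the cycle `C(2k)` admits an interval `t`-coloring iff
`2 ≤ t ≤ k + 1`. -/
theorem statement10 (k t : ℕ) (hk : 2 ≤ k) :
    (∃ φ : ZMod (2 * k) → ℕ, IsCycleIntervalColoring (2 * k) t φ) ↔
      (2 ≤ t ∧ t ≤ k + 1) := by
  haveI : NeZero (2 * k) := ⟨by omega⟩
  haveI : Fact (1 < 2 * k) := ⟨by omega⟩
  constructor
  · rintro ⟨φ, h1, h2, h3⟩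
    -- first, 2 ≤ t
    have hb0 := h1 0
    have hb1 := h1 1
    simp only [Finset.mem_Icc] at hb0 hb1
    have hstep0 := h3 0
    rw [zero_add] at hstep0
    have ht2 : 2 ≤ t := by rcases hstep0 with h | h <;> omega
    -- monotone bounds along the cycle
    have key1 : ∀ m : ℕ, ∀ i : ZMod (2 * k), φ (i + m) ≤ φ i + m := by
      intro m
      induction m with
      | zero => intro i; simp
      | succ n ih =>
        intro i
        have : (i + (n + 1 : ℕ)) = (i + n) + 1 := by push_cast; ring
        rw [this]
        rcases h3 (i + n) with h | h <;> have := ih i <;> omega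
    have key2 : ∀ m : ℕ, ∀ i : ZMod (2 * k), φ i ≤ φ (i + m) + m := by
      intro m
      induction m with
      | zero => intro i; simp
      | succ n ih =>
        intro i
        have : (i + (n + 1 : ℕ)) = (i + n) + 1 := by push_cast; ring
        rw [this]
        rcases h3 (i + n) with h | h <;> have := ih i <;> omega
    obtain ⟨i₀, hi₀⟩ := h2 t (by simp [Finset.mem_Icc]; omega)
    obtain ⟨i₁, hi₁⟩ := h2 1 (by simp [Finset.mem_Icc]; omega)
    set m := (i₁ - i₀).val with hm_def
    have hm : m < 2 * k := ZMod.val_lt _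
    have e1 : i₀ + (m : ZMod (2 * k)) = i₁ := by
      rw [hm_def, ZMod.natCast_val, ZMod.cast_id]; ring
    have e2 : i₁ + ((2 * k - m : ℕ) : ZMod (2 * k)) = i₀ := by
      rw [Nat.cast_sub hm.le, ZMod.natCast_self, ← e1]; ring
    have k2 := key2 m i₀
    rw [e1, hi₀, hi₁] at k2
    have k1 := key1 (2 * k - m) i₁
    rw [e2, hi₀, hi₁] at k1
    omega
  · rintro ⟨ht2, htk⟩
    refine ⟨fun i => cycColor t i.val, fun i => cycColor_mem t _ ht2, ?_, ?_⟩
    · intro c hc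
      simp only [Finset.mem_Icc] at hc
      refine ⟨((c - 1 : ℕ) : ZMod (2 * k)), ?_⟩
      have hlt : c - 1 < 2 * k := by omega
      dsimp only
      rw [ZMod.val_natCast, Nat.mod_eq_of_lt hlt]
      simp only [cycColor]
      split_ifs <;> omega
    · intro i
      dsimp only
      have hj : i.val < 2 * k := ZMod.val_lt i
      have hadd : (i + 1).val = (i.val + 1) % (2 * k) := by
        rw [ZMod.val_add, ZMod.val_one]
      by_cases h : i.val + 1 < 2 * k
      · rw [hadd, Nat.mod_eq_of_lt h]
        exact cycColor_step k t i.val ht2 htk hk h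
      · have hv : i.val = 2 * k - 1 := by omega
        have : (i + 1).val = 0 := by
          rw [hadd, hv]
          have : 2 * k - 1 + 1 = 2 * k := by omega
          rw [this, Nat.mod_self]
        rw [this, hv]
        right
        exact cycColor_wrap k t ht2 htk hk
end

section
/- For every odd integer n ≥ 5 and every odd integer t with 3 ≤ t ≤ n, the simple cycle C(n) admits a cyclically interval t-coloring. -/
/-- For every odd `n ≥ 5` and every odd `t` with `3 ≤ t ≤ n`, the cycle `C(n)`
admits a cyclically interval `t`-coloring. -/
theorem statement12 (n t : ℕ) (hn : 5 ≤ n) (hnodd : Odd n) (htodd : Odd t)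
    (h3 : 3 ≤ t) (htn : t ≤ n) :
    ∃ φ : ZMod n → ℕ, IsCyclicIntervalColoring n t φ := by
  haveI : NeZero n := ⟨by omega⟩
  haveI : Fact (1 < n) := ⟨by omega⟩
  set f : ℕ → ℕ := fun k => if k < t then k + 1 else if (k - t) % 2 = 0 then 1 else 2 with hf
  have hnt : (n - t) % 2 = 0 := Nat.even_iff.mp (Nat.Odd.sub_odd hnodd htodd)
  have h4 : ∀ i : ZMod n, f (i + 1).val = f i.val + 1 ∨ f i.val = f (i + 1).val + 1 ∨
      (f i.val = 1 ∧ f (i + 1).val = t) ∨ (f i.val = t ∧ f (i + 1).val = 1) := by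
    intro i
    have hvlt : i.val < n := ZMod.val_lt i
    have hw : (i + 1).val = (i.val + 1) % n := by
      rw [ZMod.val_add, ZMod.val_one]
    by_cases hcase : i.val + 1 < n
    · have hw' : (i + 1).val = i.val + 1 := by rw [hw, Nat.mod_eq_of_lt hcase]
      rw [hw']
      simp only [hf]
      split_ifs <;> omega
    · have hw' : (i + 1).val = 0 := by
        rw [hw, show i.val + 1 = n by omega, Nat.mod_self]
      rw [hw']
      simp only [hf]
      split_ifs <;> omega
  refine ⟨fun i => f i.val, ?_, ?_, ?_, h4⟩
  · intro i
    simp only [hf, Finset.mem_Icc]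
    split
    · omega
    · split <;> omega
  · intro c hc
    simp only [Finset.mem_Icc] at hc
    refine ⟨((c - 1 : ℕ) : ZMod n), ?_⟩
    have hv : ((c - 1 : ℕ) : ZMod n).val = c - 1 := ZMod.val_cast_of_lt (by omega)
    simp only [hf, hv]
    rw [if_pos (by omega)]
    omega
  · intro i
    show f i.val ≠ f (i + 1).val
    rcases h4 i with h | h | ⟨h1, h2⟩ | ⟨h1, h2⟩ <;> omega
end

section
/- For every even integer n ≥ 6 and every even integer t with n/2 + 3 - ε(n/2) ≤ t ≤ n (where ε(k) = 1 if k is even and ε(k) = 0 if k is odd), the simple cycle C(n) admits a cyclically interval t-coloring. -/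
/-- For every even `n ≥ 6` and every even `t` with `n/2 + 3 - ε(n/2) ≤ t ≤ n`,
the cycle `C(n)` admits a cyclically interval `t`-coloring. -/
theorem statement13 (n t : ℕ) (hn : 6 ≤ n) (hnev : Even n) (htev : Even t)
    (h1 : n / 2 + 3 - eps (n / 2) ≤ t) (h2 : t ≤ n) :
    ∃ φ : ZMod n → ℕ, IsCyclicIntervalColoring n t φ := by
  haveI : NeZero n := ⟨by omega⟩
  haveI : Fact (1 < n) := ⟨by omega⟩
  have heps : eps (n / 2) ≤ 1 := by unfold eps; split <;> omega
  have ht2 : 2 ≤ t := by omega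
  set f : ℕ → ℕ := fun v => if v < t then v + 1 else if v % 2 = t % 2 then 1 else t
    with hf
  have hfa : ∀ v, v < t → f v = v + 1 := by intro v hv; simp [hf, hv]
  have hfb : ∀ v, t ≤ v → v % 2 = t % 2 → f v = 1 := by
    intro v hv hp; simp [hf, Nat.not_lt.mpr hv, hp]
  have hfc : ∀ v, t ≤ v → v % 2 ≠ t % 2 → f v = t := by
    intro v hv hp; simp [hf, Nat.not_lt.mpr hv, hp]
  have hnm : n % 2 = 0 := Nat.even_iff.mp hnev
  have htm : t % 2 = 0 := Nat.even_iff.mp htev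
  have key : ∀ i : ZMod n,
      f (i + 1).val = f i.val + 1 ∨ f i.val = f (i + 1).val + 1 ∨
      (f i.val = 1 ∧ f (i + 1).val = t) ∨ (f i.val = t ∧ f (i + 1).val = 1) := by
    intro i
    have hvlt : i.val < n := i.val_lt
    have hadd : (i + 1).val = (i.val + 1) % n := by
      rw [ZMod.val_add, ZMod.val_one]
    rcases Nat.lt_or_ge (i.val + 1) n with hlt | hge
    · have h' : (i + 1).val = i.val + 1 := by rw [hadd, Nat.mod_eq_of_lt hlt]
      rw [h']
      rcases Nat.lt_or_ge (i.val + 1) t with h1' | h2'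
      · rw [hfa (i.val+1) h1', hfa i.val (by omega)]; left; rfl
      · rcases Nat.lt_or_ge i.val t with ha | hb
        · -- i.val + 1 = t
          have he : i.val + 1 = t := by omega
          rw [hfa i.val ha, hfb (i.val+1) (by omega) (by omega), he]
          right; right; right; exact ⟨rfl, rfl⟩
        · by_cases hp : i.val % 2 = t % 2
          · rw [hfb i.val hb hp, hfc (i.val+1) (by omega) (by omega)]
            right; right; left; exact ⟨rfl, rfl⟩
          · rw [hfc i.val hb hp, hfb (i.val+1) (by omega) (by omega)]
            right; right; right; exact ⟨rfl, rfl⟩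
    · have hn1 : i.val = n - 1 := by omega
      have h' : (i + 1).val = 0 := by
        rw [hadd]
        have hni : i.val + 1 = n := by omega
        rw [hni, Nat.mod_self]
      rw [h', hn1, hfa 0 (by omega)]
      rcases Nat.lt_or_ge (n - 1) t with ha | hb
      · -- t = n
        have : n - 1 + 1 = t := by omega
        rw [hfa (n-1) ha, this]
        right; right; right; exact ⟨rfl, rfl⟩
      · rw [hfc (n-1) hb (by omega)]
        right; right; right; exact ⟨rfl, rfl⟩
  refine ⟨fun i => f i.val, ?_, ?_, ?_, ?_⟩
  · intro i
    simp only [hf, Finset.mem_Icc]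
    split
    · omega
    · split <;> omega
  · intro c hc
    simp only [Finset.mem_Icc] at hc
    refine ⟨((c - 1 : ℕ) : ZMod n), ?_⟩
    have hv : ((c - 1 : ℕ) : ZMod n).val = c - 1 := ZMod.val_cast_of_lt (by omega)
    show f ((c - 1 : ℕ) : ZMod n).val = c
    rw [hv, hfa (c-1) (by omega)]; omega
  · intro i
    show f i.val ≠ f (i + 1).val
    rcases key i with h | h | ⟨h1', h2'⟩ | ⟨h1', h2'⟩ <;> omega
  · intro i
    exact key i
end

section
/- Let q ≥ 1 and t ≥ 1 be integers. If the simple path P(q) with q edges admits an interval t-coloring in which the two pendant edges receive the same color, then q is odd and q ≥ 2t - 1. -/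
/-- An interval `t`-coloring of the simple path `P(q)` with `q` edges.
The edges are `φ 0, φ 1, ..., φ (q-1)`; edges `i` and `i+1` share an internal
vertex. The coloring uses colors `1, ..., t`, all colors are used, and at every
internal vertex the two incident edges receive consecutive colors. -/
def IsPathIntervalColoring (q t : ℕ) (φ : ℕ → ℕ) : Prop :=
  (∀ i < q, φ i ∈ Finset.Icc 1 t) ∧
  (∀ c ∈ Finset.Icc 1 t, ∃ i < q, φ i = c) ∧
  (∀ i, i + 1 < q → (φ (i + 1) = φ i + 1 ∨ φ i = φ (i + 1) + 1))

/-- If the path `P(q)` (`q ≥ 1`, `t ≥ 1`) admits an interval `t`-coloring in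
which the two pendant edges receive the same color, then `q` is odd and
`q ≥ 2t - 1`. -/
theorem statement14 (q t : ℕ) (hq : 1 ≤ q) (ht : 1 ≤ t) (φ : ℕ → ℕ)
    (hφ : IsPathIntervalColoring q t φ) (hpend : φ 0 = φ (q - 1)) :
    Odd q ∧ 2 * t - 1 ≤ q := by
  obtain ⟨h1, h2, h3⟩ := hφ
  -- Lipschitz property
  have lip : ∀ d i, i + d < q → φ (i + d) ≤ φ i + d ∧ φ i ≤ φ (i + d) + d := by
    intro d
    induction d with
    | zero => intro i _; rw [Nat.add_zero]; omega
    | succ d ih =>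
      intro i h
      have h' : i + d < q := by omega
      have := ih i h'
      have hs : i + d + 1 < q := by omega
      have := h3 (i + d) hs
      have : φ (i + d + 1) = φ (i + d) + 1 ∨ φ (i + d) = φ (i + d + 1) + 1 := this
      have heq : i + (d + 1) = i + d + 1 := by omega
      rw [heq]
      omega
  -- parity
  have par : ∀ d, d < q → (φ d + d) % 2 = φ 0 % 2 := by
    intro d
    induction d with
    | zero => intro _; rfl
    | succ d ih =>
      intro h
      have := ih (by omega)
      have := h3 d (by omega)
      omega
  have hodd : Odd q := by
    have := par (q - 1) (by omega)
    rw [Nat.odd_iff]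
    omega
  refine ⟨hodd, ?_⟩
  obtain ⟨a, ha, hφa⟩ := h2 1 (by simp [ht])
  obtain ⟨b, hb, hφb⟩ := h2 t (by simp [ht])
  have h0 : φ 0 ∈ Finset.Icc 1 t := h1 0 hq
  simp only [Finset.mem_Icc] at h0
  rcases le_or_gt a b with hab | hab
  · have l1 := lip a 0 (by omega)
    have l2 := lip (b - a) a (by omega)
    have l3 := lip (q - 1 - b) b (by omega)
    rw [show 0 + a = a from by omega] at l1
    rw [show a + (b - a) = b from by omega] at l2
    rw [show b + (q - 1 - b) = q - 1 from by omega] at l3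
    omega
  · have l1 := lip b 0 (by omega)
    have l2 := lip (a - b) b (by omega)
    have l3 := lip (q - 1 - a) a (by omega)
    rw [show 0 + b = b from by omega] at l1
    rw [show b + (a - b) = a from by omega] at l2
    rw [show a + (q - 1 - a) = q - 1 from by omega] at l3
    omega
end
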